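/- arXiv:1103.1511 — 10 statements merged into one kernel-verified Lean document; each statement's English description precedes it below -/
import Mathlib

section
/- Let C be a real symmetric n×n matrix with spectral decomposition C = U Diag(λ₁,…,λₙ) Uᵀ, where U is an orthogonal matrix and λ₁,…,λₙ are the eigenvalues of C. Then the matrix X* = U Diag(max(0,λ₁),…,max(0,λₙ)) Uᵀ is positive semidefinite and satisfies ‖X* − C‖ ≤ ‖X − C‖ for every positive semidefinite symmetric n×n matrix X, with equality only if X = X*; i.e., X* is the unique projection of C onto the cone of positive semidefinite matrices in the Frobenius norm. -/
/-!
Conjugation by the orthogonal matrix `U` preserves the Frobenius norm and positive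
semidefiniteness, so it suffices to compare `diagonal L` with a positive semidefinite `Y`.
Entrywise, `max 0 l` is the projection of `l` onto `[0, ∞)` and the diagonal of `Y` is
nonnegative, which gives the Pythagorean inequality `‖X⋆ - C‖² + ‖X - X⋆‖² ≤ ‖X - C‖²`;
minimality and uniqueness of `X⋆` both follow.
-/

open scoped Matrix Matrix.Norms.Frobenius

theorem sq_max_zero_sub_add_sq_le {y : ℝ} (hy : 0 ≤ y) (l : ℝ) :
    (max 0 l - l) ^ 2 + (y - max 0 l) ^ 2 ≤ (y - l) ^ 2 := by
  rcases le_total 0 l with hl | hl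
  · simp [max_eq_right hl]
  · rw [max_eq_left hl]
    nlinarith

namespace Matrix

section Frobenius

variable {m n : Type*} [Fintype m] [Fintype n]

theorem frobenius_norm_sq_eq_sum (A : Matrix m n ℝ) : ‖A‖ ^ 2 = ∑ i, ∑ j, A i j ^ 2 := by
  rw [frobenius_norm_def, ← Real.sqrt_eq_rpow, Real.sq_sqrt (by positivity)]
  simp only [Real.rpow_two, Real.norm_eq_abs, sq_abs]

theorem frobenius_norm_sq_eq_trace (A : Matrix m n ℝ) : ‖A‖ ^ 2 = trace (Aᵀ * A) := by
  rw [frobenius_norm_sq_eq_sum, Finset.sum_comm]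
  simp only [trace, diag_apply, mul_apply, transpose_apply, sq]

theorem frobenius_norm_orthogonal_mul [DecidableEq m] {U : Matrix m m ℝ}
    (hU : U ∈ orthogonalGroup m ℝ) (A : Matrix m n ℝ) : ‖U * A‖ = ‖A‖ := by
  rw [← sq_eq_sq₀ (norm_nonneg _) (norm_nonneg _), frobenius_norm_sq_eq_trace,
    frobenius_norm_sq_eq_trace, transpose_mul, Matrix.mul_assoc, ← Matrix.mul_assoc Uᵀ,
    (mem_orthogonalGroup_iff' m ℝ).mp hU, Matrix.one_mul]

theorem frobenius_norm_mul_orthogonal [DecidableEq n] {V : Matrix n n ℝ}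
    (hV : V ∈ orthogonalGroup n ℝ) (A : Matrix m n ℝ) : ‖A * V‖ = ‖A‖ := by
  rw [← frobenius_norm_transpose, transpose_mul,
    frobenius_norm_orthogonal_mul (transpose_mem_unitaryGroup_iff.mpr hV),
    frobenius_norm_transpose]

end Frobenius

variable {n : Type*} [Fintype n] [DecidableEq n]

theorem frobenius_norm_sq_diagonal_max_zero_add_le {Y : Matrix n n ℝ} (hY : ∀ i, 0 ≤ Y i i)
    (L : n → ℝ) :
    ‖diagonal (fun i => max 0 (L i)) - diagonal L‖ ^ 2
        + ‖Y - diagonal (fun i => max 0 (L i))‖ ^ 2 ≤ ‖Y - diagonal L‖ ^ 2 := by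
  simp only [frobenius_norm_sq_eq_sum, ← Finset.sum_add_distrib]
  refine Finset.sum_le_sum fun i _ => Finset.sum_le_sum fun j _ => ?_
  rcases eq_or_ne i j with rfl | hij
  · simpa using sq_max_zero_sub_add_sq_le (hY i) (L i)
  · simp [diagonal_apply_ne _ hij]

theorem frobenius_norm_sq_psd_projection_add_le {U : Matrix n n ℝ}
    (hU : U ∈ orthogonalGroup n ℝ) (L : n → ℝ) {X : Matrix n n ℝ} (hX : X.PosSemidef) :
    ‖U * diagonal (fun i => max 0 (L i)) * Uᵀ - U * diagonal L * Uᵀ‖ ^ 2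
        + ‖X - U * diagonal (fun i => max 0 (L i)) * Uᵀ‖ ^ 2
      ≤ ‖X - U * diagonal L * Uᵀ‖ ^ 2 := by
  have hUUt : U * Uᵀ = 1 := (mem_orthogonalGroup_iff n ℝ).mp hU
  set Y := Uᵀ * X * U
  have hXY : X = U * Y * Uᵀ := by
    rw [← Matrix.mul_assoc, ← Matrix.mul_assoc, hUUt, Matrix.one_mul, Matrix.mul_assoc, hUUt,
      Matrix.mul_one]
  have hY : ∀ i, 0 ≤ Y i i := fun i => by
    simpa [conjTranspose_eq_transpose_of_trivial] using
      (hX.conjTranspose_mul_mul_same U).diag_nonneg (i := i)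
  have hconj (A B : Matrix n n ℝ) : ‖U * A * Uᵀ - U * B * Uᵀ‖ = ‖A - B‖ := by
    rw [← Matrix.sub_mul, ← Matrix.mul_sub,
      frobenius_norm_mul_orthogonal (transpose_mem_unitaryGroup_iff.mpr hU),
      frobenius_norm_orthogonal_mul hU]
  rw [hXY, hconj, hconj, hconj]
  exact frobenius_norm_sq_diagonal_max_zero_add_le hY L

end Matrix

open Matrix in
theorem psd_projection_spectral_general
    {n : ℕ} (C U : Matrix (Fin n) (Fin n) ℝ) (L : Fin n → ℝ)
    (hU : U ∈ Matrix.orthogonalGroup (Fin n) ℝ)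
    (hdecomp : C = U * Matrix.diagonal L * Uᵀ)
    (Xstar : Matrix (Fin n) (Fin n) ℝ)
    (hXstar : Xstar = U * Matrix.diagonal (fun i => max 0 (L i)) * Uᵀ) :
    Xstar.PosSemidef ∧
      ∀ X : Matrix (Fin n) (Fin n) ℝ, X.IsSymm → X.PosSemidef →
        (@norm _ Matrix.frobeniusSeminormedAddCommGroup.toNorm (Xstar - C)
            ≤ @norm _ Matrix.frobeniusSeminormedAddCommGroup.toNorm (X - C)) ∧
          (@norm _ Matrix.frobeniusSeminormedAddCommGroup.toNorm (X - C)
              = @norm _ Matrix.frobeniusSeminormedAddCommGroup.toNorm (Xstar - C)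
            → X = Xstar) := by
  subst hdecomp hXstar
  refine ⟨?_, fun X _ hX => ?_⟩
  · simpa [conjTranspose_eq_transpose_of_trivial] using
      (PosSemidef.diagonal fun i => le_max_left 0 (L i)).mul_mul_conjTranspose_same U
  have hpyth := frobenius_norm_sq_psd_projection_add_le hU L hX
  set Xstar := U * diagonal (fun i => max 0 (L i)) * Uᵀ
  refine ⟨le_of_sq_le_sq (by linarith [sq_nonneg ‖X - Xstar‖]) (norm_nonneg _), fun heq => ?_⟩
  rw [heq, add_le_iff_nonpos_right] at hpyth
  have hnorm : ‖X - Xstar‖ = 0 := (pow_eq_zero_iff two_ne_zero).mp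
    (le_antisymm hpyth (sq_nonneg _))
  exact sub_eq_zero.mp (norm_eq_zero.mp hnorm)

/-- The projection of a real symmetric matrix `C = U Diag(λ) Uᵀ` onto the cone of
positive semidefinite matrices, in the Frobenius norm, is
`X* = U Diag(max 0 λ) Uᵀ`: it is positive semidefinite, it is at least as close to `C`
as any positive semidefinite symmetric matrix `X`, with equality of distances only
when `X = X*`. -/
theorem psd_projection_spectral
    {n : ℕ} (C U : Matrix (Fin n) (Fin n) ℝ) (L : Fin n → ℝ)
    (hC : C.IsSymm)
    (hU : U ∈ Matrix.orthogonalGroup (Fin n) ℝ)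
    (hdecomp : C = U * Matrix.diagonal L * Uᵀ)
    (Xstar : Matrix (Fin n) (Fin n) ℝ)
    (hXstar : Xstar = U * Matrix.diagonal (fun i => max 0 (L i)) * Uᵀ) :
    Xstar.PosSemidef ∧
      ∀ X : Matrix (Fin n) (Fin n) ℝ, X.IsSymm → X.PosSemidef →
        (@norm _ Matrix.frobeniusSeminormedAddCommGroup.toNorm (Xstar - C)
            ≤ @norm _ Matrix.frobeniusSeminormedAddCommGroup.toNorm (X - C)) ∧
          (@norm _ Matrix.frobeniusSeminormedAddCommGroup.toNorm (X - C)
              = @norm _ Matrix.frobeniusSeminormedAddCommGroup.toNorm (Xstar - C)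
            → X = Xstar) :=
  psd_projection_spectral_general C U L hU hdecomp Xstar hXstar
end

section
/- Let K be a nonempty closed convex cone in ℝⁿ, let c ∈ ℝⁿ, A ∈ ℝ^{m×n}, b ∈ ℝᵐ. Define the dual function θ(y) = inf over x ∈ K of [½‖c − x‖² − ⟨y, Ax − b⟩]. Then for every y ∈ ℝᵐ, θ(y) = ⟨b, y⟩ + ½(‖c‖² − ‖x(y)‖²), where x(y) = proj_K(c + Aᵀy). -/
/-!
With `w = c + Aᵀy`, expanding the square shows that the objective is `½‖w - x‖²` plus a constant,
so its infimum over `K` is attained at `p = proj_K w`. As `K` is a cone, `p` is also the point of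
the ray `ℝ₊ p` nearest to `w`, which forces `w - p ⟂ p`; by Pythagoras `‖w - p‖² = ‖w‖² - ‖p‖²`.
-/

open scoped Matrix RealInnerProductSpace

/-- Matrix-vector multiplication, viewed as a map between Euclidean spaces. -/
noncomputable def mulVecE {m n : ℕ} (A : Matrix (Fin m) (Fin n) ℝ)
    (x : EuclideanSpace ℝ (Fin n)) : EuclideanSpace ℝ (Fin m) :=
  WithLp.toLp 2 (A.mulVec x)

lemma inner_mulVecE_right {m n : ℕ} (A : Matrix (Fin m) (Fin n) ℝ)
    (y : EuclideanSpace ℝ (Fin m)) (x : EuclideanSpace ℝ (Fin n)) :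
    ⟪y, mulVecE A x⟫ = ⟪mulVecE Aᵀ y, x⟫ := by
  simp only [mulVecE, EuclideanSpace.inner_eq_star_dotProduct, star_trivial,
    Matrix.mulVec_transpose]
  rw [dotProduct_comm, Matrix.dotProduct_mulVec, dotProduct_comm]

section InnerProductSpace

variable {E : Type*} [NormedAddCommGroup E] [InnerProductSpace ℝ E]

theorem inner_sub_eq_zero_of_forall_norm_sub_le_norm_sub_smul {w p : E}
    (hp : ∀ t : ℝ, 0 ≤ t → ‖w - p‖ ≤ ‖w - t • p‖) : ⟪w - p, p⟫ = 0 := by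
  set ray : Set E := LinearMap.toSpanSingleton ℝ E p '' Set.Ici 0
  have hray : Convex ℝ ray := (convex_Ici 0).linear_image _
  have hp_ray : p ∈ ray := ⟨1, Set.mem_Ici.2 zero_le_one, one_smul ℝ p⟩
  have hnearest : ‖w - p‖ = ⨅ v : ray, ‖w - v‖ := by
    have : Nonempty ray := ⟨⟨p, hp_ray⟩⟩
    refine le_antisymm (le_ciInf ?_) (ciInf_le ⟨0, ?_⟩ (⟨p, hp_ray⟩ : ray))
    · rintro ⟨_, t, ht, rfl⟩
      exact hp t ht
    · rintro _ ⟨v, rfl⟩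
      exact norm_nonneg _
  have hvar := (norm_eq_iInf_iff_real_inner_le_zero hray hp_ray).1 hnearest
  have h₀ : ⟪w - p, 0 - p⟫ ≤ 0 := hvar 0 ⟨0, Set.mem_Ici.2 le_rfl, zero_smul ℝ p⟩
  have h₂ : ⟪w - p, (2 : ℝ) • p - p⟫ ≤ 0 := hvar _ ⟨2, Set.mem_Ici.2 zero_le_two, rfl⟩
  rw [zero_sub, inner_neg_right] at h₀
  rw [two_smul, add_sub_cancel_right] at h₂
  linarith

theorem norm_sub_sq_eq_of_forall_norm_sub_le_norm_sub_smul {w p : E}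
    (hp : ∀ t : ℝ, 0 ≤ t → ‖w - p‖ ≤ ‖w - t • p‖) : ‖w - p‖ ^ 2 = ‖w‖ ^ 2 - ‖p‖ ^ 2 := by
  have := norm_add_sq_eq_norm_sq_add_norm_sq_real
    (inner_sub_eq_zero_of_forall_norm_sub_le_norm_sub_smul hp)
  rw [sub_add_cancel] at this
  linarith

theorem half_norm_sub_sq_sub_inner (c u x : E) :
    (1 / 2) * ‖c - x‖ ^ 2 - ⟪u, x⟫
      = (1 / 2) * ‖c + u - x‖ ^ 2 + (1 / 2) * (‖c‖ ^ 2 - ‖c + u‖ ^ 2) := by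
  rw [norm_sub_sq_real, norm_sub_sq_real, inner_add_left]
  ring

end InnerProductSpace

theorem csInf_image_half_norm_sub_sq_add {E : Type*} [SeminormedAddCommGroup E] {K : Set E}
    {w p : E} (hpK : p ∈ K) (hp : ∀ v ∈ K, ‖w - p‖ ≤ ‖w - v‖) (C : ℝ) :
    sInf ((fun x => (1 / 2) * ‖w - x‖ ^ 2 + C) '' K) = (1 / 2) * ‖w - p‖ ^ 2 + C := by
  refine IsLeast.csInf_eq ⟨⟨p, hpK, rfl⟩, ?_⟩
  rintro _ ⟨v, hv, rfl⟩
  have := pow_le_pow_left₀ (norm_nonneg _) (hp v hv) 2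
  dsimp only
  linarith

theorem dual_function_value_general
    {m n : ℕ} (K : Set (EuclideanSpace ℝ (Fin n)))
    (hKcone : ∀ x ∈ K, ∀ t : ℝ, 0 ≤ t → t • x ∈ K)
    (projK : EuclideanSpace ℝ (Fin n) → EuclideanSpace ℝ (Fin n))
    (hprojK : ∀ w, projK w ∈ K ∧ ∀ v ∈ K, ‖w - projK w‖ ≤ ‖w - v‖)
    (c : EuclideanSpace ℝ (Fin n)) (A : Matrix (Fin m) (Fin n) ℝ)
    (b : EuclideanSpace ℝ (Fin m)) :
    ∀ y : EuclideanSpace ℝ (Fin m),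
      sInf ((fun x => (1 / 2) * ‖c - x‖ ^ 2 - ⟪y, mulVecE A x - b⟫) '' K)
        = ⟪b, y⟫ + (1 / 2) * (‖c‖ ^ 2 - ‖projK (c + mulVecE Aᵀ y)‖ ^ 2) := by
  intro y
  set w := c + mulVecE Aᵀ y
  obtain ⟨hpK, hpmin⟩ := hprojK w
  have hobjective : (fun x => (1 / 2) * ‖c - x‖ ^ 2 - ⟪y, mulVecE A x - b⟫)
      = fun x => (1 / 2) * ‖w - x‖ ^ 2 + ((1 / 2) * (‖c‖ ^ 2 - ‖w‖ ^ 2) + ⟪b, y⟫) := by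
    funext x
    rw [inner_sub_right, inner_mulVecE_right, real_inner_comm y b, sub_sub_eq_add_sub,
      add_sub_right_comm,       half_norm_sub_sq_sub_inner]
    ring
  have hpythagoras : ‖w - projK w‖ ^ 2 = ‖w‖ ^ 2 - ‖projK w‖ ^ 2 :=
    norm_sub_sq_eq_of_forall_norm_sub_le_norm_sub_smul fun t ht =>
      hpmin _ (hKcone _ hpK t ht)
  rw [hobjective, csInf_image_half_norm_sub_sq_add hpK hpmin, hpythagoras]
  ring

/-- For a nonempty closed convex cone `K ⊆ ℝⁿ`, the dual function
`θ(y) = inf_{x ∈ K} [½‖c − x‖² − ⟨y, Ax − b⟩]` has the explicit expression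
`θ(y) = ⟨b, y⟩ + ½(‖c‖² − ‖x(y)‖²)` where `x(y) = proj_K (c + Aᵀ y)`. -/
theorem dual_function_value
    {m n : ℕ} (K : Set (EuclideanSpace ℝ (Fin n)))
    (hKne : K.Nonempty) (hKcl : IsClosed K) (hKconv : Convex ℝ K)
    (hKcone : ∀ x ∈ K, ∀ t : ℝ, 0 ≤ t → t • x ∈ K)
    (projK : EuclideanSpace ℝ (Fin n) → EuclideanSpace ℝ (Fin n))
    (hprojK : ∀ w, projK w ∈ K ∧ ∀ v ∈ K, ‖w - projK w‖ ≤ ‖w - v‖)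
    (c : EuclideanSpace ℝ (Fin n)) (A : Matrix (Fin m) (Fin n) ℝ)
    (b : EuclideanSpace ℝ (Fin m)) :
    ∀ y : EuclideanSpace ℝ (Fin m),
      sInf ((fun x => (1 / 2) * ‖c - x‖ ^ 2 - ⟪y, mulVecE A x - b⟫) '' K)
        = ⟪b, y⟫ + (1 / 2) * (‖c‖ ^ 2 - ‖projK (c + mulVecE Aᵀ y)‖ ^ 2) :=
  dual_function_value_general K hKcone projK hprojK c A b
end

section
/- Let K be a nonempty closed convex cone in ℝⁿ, let c ∈ ℝⁿ, A ∈ ℝ^{m×n}, b ∈ ℝᵐ, and define θ(y) = ⟨b, y⟩ + ½(‖c‖² − ‖proj_K(c + Aᵀy)‖²) for y ∈ ℝᵐ. Then θ is concave on ℝᵐ and differentiable at every y ∈ ℝᵐ, with gradient ∇θ(y) = b − A·proj_K(c + Aᵀy). -/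
/-! For a cone `K`, the projection satisfies `w - P w ⊥ P w`, so that
`½‖P w‖² = sup_{v ∈ K} (⟪w, v⟫ - ½‖v‖²)`: a supremum of affine functions, hence convex, with
`P w` as a subgradient at `w`. Since `P` is `1`-Lipschitz, the first-order error
`½‖P w'‖² - ½‖P w‖² - ⟪P w, w' - w⟫` lies between `0` and `‖w' - w‖²`, so `P w` is in fact
the gradient. Finally `θ` is an affine function minus this convex function composed with
`y ↦ c + Aᵀy`, and the chain rule with `⟪A u, y⟫ = ⟪u, Aᵀy⟫` gives the gradient. -/

open scoped Matrix RealInnerProductSpace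

open Set Filter Asymptotics

section MetricProjection

variable {E : Type*} [NormedAddCommGroup E] [InnerProductSpace ℝ E]

def IsMetricProjection (K : Set E) (P : E → E) : Prop :=
  ∀ w, P w ∈ K ∧ ∀ v ∈ K, ‖w - P w‖ ≤ ‖w - v‖

namespace IsMetricProjection

variable {K : Set E} {P : E → E} (hK : Convex ℝ K) (hP : IsMetricProjection K P)
include hK hP

theorem inner_sub_nonpos (w : E) {v : E} (hv : v ∈ K) : ⟪w - P w, v - P w⟫ ≤ 0 := by
  have : Nonempty K := ⟨⟨v, hv⟩⟩
  have hbdd : BddBelow (range fun u : K => ‖w - (u : E)‖) :=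
    ⟨0, forall_mem_range.2 fun _ => norm_nonneg _⟩
  refine (norm_eq_iInf_iff_real_inner_le_zero hK (hP w).1).1 ?_ v hv
  exact le_antisymm (le_ciInf fun u => (hP w).2 u u.2) (ciInf_le hbdd ⟨P w, (hP w).1⟩)

theorem norm_sub_sq_le_inner (w w' : E) :
    ‖P w' - P w‖ ^ 2 ≤ ⟪w' - w, P w' - P w⟫ := by
  have h := hP.inner_sub_nonpos hK w (hP w').1
  have h' := hP.inner_sub_nonpos hK w' (hP w).1
  rw [← real_inner_self_eq_norm_sq]
  simp only [inner_sub_left, inner_sub_right, real_inner_comm] at h h' ⊢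
  linarith

theorem norm_sub_le (w w' : E) : ‖P w' - P w‖ ≤ ‖w' - w‖ := by
  have h := (hP.norm_sub_sq_le_inner hK w w').trans (real_inner_le_norm _ _)
  nlinarith [norm_nonneg (P w' - P w), norm_nonneg (w' - w)]

variable (hKcone : ∀ x ∈ K, ∀ t : ℝ, 0 ≤ t → t • x ∈ K)
include hKcone

/-- On a cone, testing the variational inequality with `0` and `2 • P w` shows `w - P w ⊥ P w`. -/
theorem inner_apply_eq_norm_sq (w : E) :
    ⟪w, P w⟫ = ‖P w‖ ^ 2 := by
  have h0 := hP.inner_sub_nonpos hK w (hKcone _ (hP w).1 0 le_rfl)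
  have h2 := hP.inner_sub_nonpos hK w (hKcone _ (hP w).1 2 zero_le_two)
  rw [zero_smul, zero_sub, inner_neg_right] at h0
  rw [two_smul, add_sub_cancel_right] at h2
  rw [inner_sub_left, real_inner_self_eq_norm_sq] at h0 h2
  linarith

theorem inner_sub_half_norm_sq_le (w : E) {v : E} (hv : v ∈ K) :
    ⟪w, v⟫ - ‖v‖ ^ 2 / 2 ≤ ‖P w‖ ^ 2 / 2 := by
  have h := pow_le_pow_left₀ (norm_nonneg _) ((hP w).2 v hv) 2
  rw [norm_sub_sq_real, norm_sub_sq_real, hP.inner_apply_eq_norm_sq hK hKcone w] at h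
  linarith

theorem convexOn_half_norm_sq : ConvexOn ℝ univ fun w => ‖P w‖ ^ 2 / 2 := by
  refine ⟨convex_univ, fun x _ y _ a b ha hb hab => ?_⟩
  set v := P (a • x + b • y)
  have hv : v ∈ K := (hP _).1
  have hx := hP.inner_sub_half_norm_sq_le hK hKcone x hv
  have hy := hP.inner_sub_half_norm_sq_le hK hKcone y hv
  have hz := hP.inner_apply_eq_norm_sq hK hKcone (a • x + b • y)
  rw [inner_add_left, real_inner_smul_left, real_inner_smul_left] at hz
  simp only [smul_eq_mul]
  nlinarith [mul_le_mul_of_nonneg_left hx ha, mul_le_mul_of_nonneg_left hy hb]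

theorem half_norm_sq_add_inner_le (w w' : E) :
    ‖P w‖ ^ 2 / 2 + ⟪P w, w' - w⟫ ≤ ‖P w'‖ ^ 2 / 2 := by
  have h := hP.inner_sub_half_norm_sq_le hK hKcone w' (hP w).1
  have hw := hP.inner_apply_eq_norm_sq hK hKcone w
  rw [inner_sub_right, real_inner_comm w', real_inner_comm w]
  linarith

theorem abs_half_norm_sq_sub_sub_inner_le (w w' : E) :
    |‖P w'‖ ^ 2 / 2 - ‖P w‖ ^ 2 / 2 - ⟪P w, w' - w⟫| ≤ ‖w' - w‖ ^ 2 := by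
  have hlow := hP.half_norm_sq_add_inner_le hK hKcone w w'
  have hup := hP.half_norm_sq_add_inner_le hK hKcone w' w
  have hcs : ⟪P w' - P w, w' - w⟫ ≤ ‖w' - w‖ ^ 2 :=
    (real_inner_le_norm _ _).trans (by
      nlinarith [hP.norm_sub_le hK w w', norm_nonneg (w' - w)])
  simp only [inner_sub_left, inner_sub_right] at hlow hup hcs ⊢
  rw [abs_le]
  constructor <;> linarith

theorem hasGradientAt_half_norm_sq [CompleteSpace E] (w : E) :
    HasGradientAt (fun w => ‖P w‖ ^ 2 / 2) (P w) w := by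
  rw [hasGradientAt_iff_isLittleO_nhds_zero]
  refine IsBigO.trans_isLittleO ?_ (isLittleO_norm_pow_id one_lt_two)
  refine IsBigO.of_bound 1 (Eventually.of_forall fun h => ?_)
  have := hP.abs_half_norm_sq_sub_sub_inner_le hK hKcone w (w + h)
  rw [add_sub_cancel_left] at this
  simpa [Real.norm_eq_abs] using this

end IsMetricProjection

end MetricProjection

theorem inner_mulVecE_left {m n : ℕ} (A : Matrix (Fin m) (Fin n) ℝ)
    (x : EuclideanSpace ℝ (Fin n)) (y : EuclideanSpace ℝ (Fin m)) :
    ⟪mulVecE A x, y⟫ = ⟪x, mulVecE Aᵀ y⟫ := by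
  have h := LinearMap.adjoint_inner_right (Matrix.toEuclideanLin A) x y
  rw [← Matrix.toEuclideanLin_conjTranspose_eq_adjoint,
    Matrix.conjTranspose_eq_transpose_of_trivial] at h
  exact h.symm

theorem dual_function_concave_differentiable_general
    {m n : ℕ} (K : Set (EuclideanSpace ℝ (Fin n)))
    (hKconv : Convex ℝ K)
    (hKcone : ∀ x ∈ K, ∀ t : ℝ, 0 ≤ t → t • x ∈ K)
    (projK : EuclideanSpace ℝ (Fin n) → EuclideanSpace ℝ (Fin n))
    (hprojK : ∀ w, projK w ∈ K ∧ ∀ v ∈ K, ‖w - projK w‖ ≤ ‖w - v‖)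
    (c : EuclideanSpace ℝ (Fin n)) (A : Matrix (Fin m) (Fin n) ℝ)
    (b : EuclideanSpace ℝ (Fin m))
    (θ : EuclideanSpace ℝ (Fin m) → ℝ)
    (hθ : ∀ y, θ y = ⟪b, y⟫ + (1 / 2) * (‖c‖ ^ 2 - ‖projK (c + mulVecE Aᵀ y)‖ ^ 2)) :
    ConcaveOn ℝ Set.univ θ ∧
      ∀ y : EuclideanSpace ℝ (Fin m),
        HasGradientAt θ (b - mulVecE A (projK (c + mulVecE Aᵀ y))) y := by
  have hP : IsMetricProjection K projK := hprojK
  let T := (Matrix.toEuclideanLin Aᵀ).toContinuousLinearMap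
  have hθT : θ = fun y => (⟪b, y⟫ + ‖c‖ ^ 2 / 2) - ‖projK (c + T y)‖ ^ 2 / 2 := by
    funext y
    rw [hθ]
    change _ = _ - ‖projK (c + mulVecE Aᵀ y)‖ ^ 2 / 2
    ring
  refine ⟨?_, fun y => ?_⟩
  · have hf := ((hP.convexOn_half_norm_sq hKconv hKcone).translate_right c).comp_linearMap
      T.toLinearMap
    rw [hθT]
    exact (((innerₛₗ ℝ b).concaveOn convex_univ).add_const _).sub hf
  · have hf := (hP.hasGradientAt_half_norm_sq hKconv hKcone (c + T y)).hasFDerivAt.comp y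
      (T.hasFDerivAt.const_add c)
    rw [hasGradientAt_iff_hasFDerivAt, hθT]
    refine (((innerSL ℝ b).hasFDerivAt.add_const _).sub hf).congr_fderiv ?_
    ext z
    change ⟪b, z⟫ - ⟪projK (c + mulVecE Aᵀ y), mulVecE Aᵀ z⟫
      = ⟪b - mulVecE A (projK (c + mulVecE Aᵀ y)), z⟫
    rw [inner_sub_left, inner_mulVecE_left]

/-- For a nonempty closed convex cone `K ⊆ ℝⁿ`, the dual function
`θ(y) = ⟨b, y⟩ + ½(‖c‖² − ‖proj_K(c + Aᵀy)‖²)` is concave on `ℝᵐ` and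
differentiable everywhere, with gradient `∇θ(y) = b − A·proj_K(c + Aᵀy)`. -/
theorem dual_function_concave_differentiable
    {m n : ℕ} (K : Set (EuclideanSpace ℝ (Fin n)))
    (hKne : K.Nonempty) (hKcl : IsClosed K) (hKconv : Convex ℝ K)
    (hKcone : ∀ x ∈ K, ∀ t : ℝ, 0 ≤ t → t • x ∈ K)
    (projK : EuclideanSpace ℝ (Fin n) → EuclideanSpace ℝ (Fin n))
    (hprojK : ∀ w, projK w ∈ K ∧ ∀ v ∈ K, ‖w - projK w‖ ≤ ‖w - v‖)
    (c : EuclideanSpace ℝ (Fin n)) (A : Matrix (Fin m) (Fin n) ℝ)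
    (b : EuclideanSpace ℝ (Fin m))
    (θ : EuclideanSpace ℝ (Fin m) → ℝ)
    (hθ : ∀ y, θ y = ⟪b, y⟫ + (1 / 2) * (‖c‖ ^ 2 - ‖projK (c + mulVecE Aᵀ y)‖ ^ 2)) :
    ConcaveOn ℝ Set.univ θ ∧
      ∀ y : EuclideanSpace ℝ (Fin m),
        HasGradientAt θ (b - mulVecE A (projK (c + mulVecE Aᵀ y))) y :=
  dual_function_concave_differentiable_general K hKconv hKcone projK hprojK c A b θ hθ
end

section
/- Let K be a closed convex cone in ℝⁿ with nonempty interior and polar cone K° = {s ∈ ℝⁿ : ⟨s,x⟩ ≤ 0 for all x ∈ K}, let c ∈ ℝⁿ, A_E ∈ ℝ^{mE×n}, b_E ∈ ℝ^{mE}, A_I ∈ ℝ^{mI×n}, b_I ∈ ℝ^{mI}, and let P = {x : A_E x = b_E, A_I x ≤ b_I}. Assume the Slater condition: there exists x̄ in the interior of K with A_E x̄ = b_E and A_I x̄ ≤ b_I. Then x̄* ∈ ℝⁿ is the projection of c onto P ∩ K if and only if there exist y ∈ ℝ^{mE}, z ∈ ℝ₊^{mI} and u ∈ K° such that: x̄*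 − c + u + A_Eᵀy + A_Iᵀz = 0; A_E x̄* = b_E; A_I x̄* ≤ b_I with ⟨z, A_I x̄* − b_I⟩ = 0; and x̄* ∈ K with ⟨u, x̄*⟩ = 0. -/
/-!
Being the projection of `c` onto the convex set `P ∩ K` is the variational inequality
`c - x* ∈ N_{P ∩ K}(x*)` for the normal cone `N`. Since the Slater point lies in
`P ∩ interior K`, separating `{(y, α) | y ∈ P, α ≤ ⟪d, y - x*⟫}` from `interior K × (0, ∞)`
splits `N_{P ∩ K}(x*)` as `N_P(x*) + N_K(x*)`. As `K` is a cone,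
`N_K(x*) = {u ∈ K° | ⟪u, x*⟫ = 0}`, and Farkas' lemma identifies `N_P(x*)` with the vectors
`A_Eᵀ y + A_Iᵀ z`, `z ≥ 0`, complementary to the constraints. Farkas' lemma rests on the
closedness of finitely generated cones, which follows from a conic Carathéodory argument.
-/

open scoped Matrix RealInnerProductSpace

open Set
open scoped Pointwise

namespace PointedCone

variable {E : Type*} [NormedAddCommGroup E] [NormedSpace ℝ E]

theorem mem_hull_range_iff {ι : Type*} [Fintype ι] {g : ι → E} {x : E} :
    x ∈ hull ℝ (range g) ↔ ∃ l : ι → ℝ, 0 ≤ l ∧ ∑ i, l i • g i = x := by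
  rw [Submodule.mem_span_range_iff_exists_fun]
  constructor
  · rintro ⟨c, rfl⟩
    exact ⟨fun i => c i, fun i => (c i).2, rfl⟩
  · rintro ⟨l, hl, rfl⟩
    exact ⟨fun i => ⟨l i, hl i⟩, rfl⟩

theorem isClosed_hull_range_of_linearIndependent {ι : Type*} [Fintype ι] {g : ι → E}
    (hg : LinearIndependent ℝ g) : IsClosed (hull ℝ (range g) : Set E) := by
  have hker : LinearMap.ker (Fintype.linearCombination ℝ g) = ⊥ := by
    rw [LinearMap.ker_eq_bot']
    intro l hl
    funext i
    exact Fintype.linearIndependent_iff.mp hg l (by rwa [Fintype.linearCombination_apply] at hl) i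
  have himage : (hull ℝ (range g) : Set E) = Fintype.linearCombination ℝ g '' Ici 0 := by
    ext x
    simp [mem_hull_range_iff, Fintype.linearCombination_apply]
  rw [himage]
  exact (LinearMap.isClosedEmbedding_of_injective hker).isClosedMap _ isClosed_Ici

/-- Conic Carathéodory step: shift the coefficients along a linear dependence until the first
one vanishes. -/
theorem exists_mem_hull_range_subtype_ne {ι : Type*} [Fintype ι] {g : ι → E}
    (hg : ¬LinearIndependent ℝ g) {x : E} (hx : x ∈ hull ℝ (range g)) :
    ∃ j, x ∈ hull ℝ (range fun i : {i // i ≠ j} => g i.1) := by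
  classical
  obtain ⟨ν, hν, k, hk⟩ : ∃ ν : ι → ℝ, ∑ i, ν i • g i = 0 ∧ ∃ k, 0 < ν k := by
    obtain ⟨ν, hν, k, hk⟩ := Fintype.not_linearIndependent_iff.mp hg
    rcases hk.lt_or_gt with hk | hk
    · exact ⟨-ν, by simp [hν], k, by simpa using hk⟩
    · exact ⟨ν, hν, k, hk⟩
  obtain ⟨l, hl, rfl⟩ := mem_hull_range_iff.mp hx
  obtain ⟨j, hj, hjmin⟩ := Finset.exists_min_image {i | 0 < ν i} (fun i => l i / ν i)
    ⟨k, by simpa using hk⟩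
  simp only [Finset.mem_filter, Finset.mem_univ, true_and] at hj hjmin
  set t := l j / ν j
  have ht : 0 ≤ t := div_nonneg (hl j) hj.le
  have hl' : ∀ i, 0 ≤ l i - t * ν i := by
    intro i
    by_cases hi : 0 < ν i
    · linarith [(le_div_iff₀ hi).mp (hjmin i hi)]
    · linarith [show 0 ≤ l i from hl i, mul_nonpos_of_nonneg_of_nonpos ht (not_lt.mp hi)]
  have hsum : ∑ i, (l i - t * ν i) • g i = ∑ i, l i • g i := by
    simp only [sub_smul, mul_smul, Finset.sum_sub_distrib, ← Finset.smul_sum, hν, smul_zero,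
      sub_zero]
  have hj0 : l j - t * ν j = 0 := by
    rw [div_mul_cancel₀ _ hj.ne', sub_self]
  refine ⟨j, mem_hull_range_iff.mpr ⟨fun i => l i - t * ν i, fun i => hl' i, ?_⟩⟩
  rw [← hsum, Fintype.sum_eq_add_sum_subtype_ne _ j, hj0, zero_smul, zero_add]

theorem isClosed_hull_range {ι : Type*} [Finite ι] (g : ι → E) :
    IsClosed (hull ℝ (range g) : Set E) := by
  induction h : Nat.card ι using Nat.strong_induction_on generalizing ι with
  | _ N ih =>
  have := Fintype.ofFinite ι
  by_cases hg : LinearIndependent ℝ g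
  · exact isClosed_hull_range_of_linearIndependent hg
  have hunion : (hull ℝ (range g) : Set E) =
      ⋃ j, hull ℝ (range fun i : {i // i ≠ j} => g i.1) := by
    refine Subset.antisymm
      (fun x hx => mem_iUnion.mpr (exists_mem_hull_range_subtype_ne hg hx))
      (iUnion_subset fun j => Submodule.span_mono ?_)
    rintro _ ⟨i, rfl⟩
    exact ⟨i, rfl⟩
  rw [hunion]
  exact isClosed_iUnion_of_finite fun j =>
    ih _ (h ▸ Finite.card_subtype_lt (p := (· ≠ j)) (x := j) (by simp)) _ rfl

end PointedCone

theorem Convex.subset_of_interior_subset_of_isClosed {E : Type*} [AddCommGroup E]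
    [TopologicalSpace E] [IsTopologicalAddGroup E] [Module ℝ E] [ContinuousSMul ℝ E]
    {t C : Set E} (ht : Convex ℝ t) (hint : (interior t).Nonempty) (hC : IsClosed C)
    (h : interior t ⊆ C) : t ⊆ C := by
  have := closure_minimal h hC
  rw [ht.closure_interior_eq_closure_of_nonempty_interior hint] at this
  exact subset_closure.trans this

section NormalCone

variable {E : Type*} [NormedAddCommGroup E] [InnerProductSpace ℝ E]

def normalCone (s : Set E) (x : E) : Set E := {d | ∀ y ∈ s, ⟪d, y - x⟫ ≤ 0}

theorem smul_mem_normalCone {s : Set E} {x d : E} {t : ℝ} (ht : 0 ≤ t)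
    (hd : d ∈ normalCone s x) : t • d ∈ normalCone s x := fun y hy => by
  rw [real_inner_smul_left]
  exact mul_nonpos_of_nonneg_of_nonpos ht (hd y hy)

theorem add_mem_normalCone_inter {s t : Set E} {x d e : E} (hd : d ∈ normalCone s x)
    (he : e ∈ normalCone t x) : d + e ∈ normalCone (s ∩ t) x := fun y hy => by
  rw [inner_add_left]
  exact add_nonpos (hd y hy.1) (he y hy.2)

theorem forall_norm_sub_le_iff_sub_mem_normalCone {s : Set E} (hs : Convex ℝ s) {x : E}
    (hx : x ∈ s) (c : E) : (∀ y ∈ s, ‖c - x‖ ≤ ‖c - y‖) ↔ c - x ∈ normalCone s x := by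
  have : Nonempty s := ⟨⟨x, hx⟩⟩
  rw [normalCone, mem_ofPred_eq, ← norm_eq_iInf_iff_real_inner_le_zero hs hx]
  have hbdd : BddBelow (range fun y : s => ‖c - y‖) := ⟨0, by rintro _ ⟨y, rfl⟩; positivity⟩
  constructor
  · exact fun h => le_antisymm (le_ciInf fun y => h y y.2) (ciInf_le hbdd ⟨x, hx⟩)
  · exact fun h y hy => h ▸ ciInf_le hbdd ⟨y, hy⟩

theorem normalCone_eq_of_smul_mem {K : Set E} (hK : ∀ x ∈ K, ∀ t : ℝ, 0 ≤ t → t • x ∈ K)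
    {x : E} (hx : x ∈ K) :
    normalCone K x = {u | (∀ k ∈ K, ⟪u, k⟫ ≤ 0) ∧ ⟪u, x⟫ = 0} := by
  ext u
  refine ⟨fun hu => ?_, fun ⟨hpolar, hux⟩ k hk => ?_⟩
  · have h0 := hu _ (hK x hx 0 le_rfl)
    have h2 := hu _ (hK x hx 2 zero_le_two)
    rw [zero_smul, zero_sub, inner_neg_right] at h0
    rw [two_smul, add_sub_cancel_right] at h2
    have hux : ⟪u, x⟫ = 0 := by linarith
    refine ⟨fun k hk => ?_, hux⟩
    simpa [inner_sub_right, hux] using hu k hk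
  · rw [inner_sub_right, hux, sub_zero]
    exact hpolar k hk

variable [CompleteSpace E]

theorem StrongDual.exists_apply_prod_eq_inner_add_mul (f : StrongDual ℝ (E × ℝ)) :
    ∃ (w : E) (β : ℝ), ∀ v s, f (v, s) = ⟪w, v⟫ + β * s := by
  refine ⟨(InnerProductSpace.toDual ℝ E).symm (f.comp (.inl ℝ E ℝ)), f (0, 1), fun v s => ?_⟩
  rw [InnerProductSpace.toDual_symm_apply, show (v, s) = (v, 0) + s • ((0 : E), (1 : ℝ)) by simp,
    map_add, map_smul, smul_eq_mul, mul_comm]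
  rfl

theorem exists_separation_of_mem_normalCone_inter {s t : Set E} (hs : Convex ℝ s)
    (ht : Convex ℝ t) {x d : E} (hd : d ∈ normalCone (s ∩ t) x) :
    ∃ (w : E) (β u : ℝ), (∀ y ∈ s, u ≤ ⟪w, y⟫ + β * ⟪d, y - x⟫) ∧
      ∀ k ∈ interior t, ∀ α > 0, ⟪w, k⟫ + β * α < u := by
  let A : Set (E × ℝ) := {p | p.1 ∈ s ∧ p.2 ≤ ⟪d, p.1 - x⟫}
  have hA : Convex ℝ A := by
    have hf : ConcaveOn ℝ s fun y => ⟪d, y - x⟫ := by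
      simp_rw [inner_sub_right]
      exact ((innerₛₗ ℝ d).concaveOn hs).sub (convexOn_const _ hs)
    exact hf.convex_hypograph
  have hdisj : Disjoint (interior t ×ˢ Ioi (0 : ℝ)) A := by
    rw [Set.disjoint_left]
    rintro ⟨y, α⟩ ⟨hyt, hα⟩ ⟨hys, hαy⟩
    have := hd y ⟨hys, interior_subset hyt⟩
    simp only [mem_Ioi] at hα
    linarith
  obtain ⟨f, u, hfB, hfA⟩ := geometric_hahn_banach_open (ht.interior.prod (convex_Ioi (0 : ℝ)))
    (isOpen_interior.prod isOpen_Ioi) hA hdisj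
  obtain ⟨w, β, hf⟩ := StrongDual.exists_apply_prod_eq_inner_add_mul f
  refine ⟨w, β, u, fun y hy => ?_, fun k hk α hα => ?_⟩
  · rw [← hf]; exact hfA (y, _) ⟨hy, le_rfl⟩
  · rw [← hf]; exact hfB (k, α) ⟨hk, hα⟩

theorem normalCone_inter {s t : Set E} (hs : Convex ℝ s) (ht : Convex ℝ t)
    (hst : (s ∩ interior t).Nonempty) {x : E} (hx : x ∈ s ∩ t) :
    normalCone (s ∩ t) x = normalCone s x + normalCone t x := by
  refine Subset.antisymm (fun d hd => ?_) fun _ ⟨d, hd, e, he, hde⟩ =>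
    hde ▸ add_mem_normalCone_inter hd he
  obtain ⟨w, β, u, hsA, hintB⟩ := exists_separation_of_mem_normalCone_inter hs ht hd
  have hβ : β < 0 := by
    obtain ⟨z, hzs, hzt⟩ := hst
    by_contra! hβ
    have h1 := hsA z hzs
    have h2 := hintB z hzt 1 one_pos
    have h3 := mul_nonpos_of_nonneg_of_nonpos hβ (hd z ⟨hzs, interior_subset hzt⟩)
    linarith
  have htu : ∀ k ∈ t, ⟪w, k⟫ ≤ u := by
    refine ht.subset_of_interior_subset_of_isClosed (C := {k | ⟪w, k⟫ ≤ u}) ⟨_, hst.some_mem.2⟩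
      (isClosed_le (continuous_const.inner continuous_id) continuous_const) fun k hk =>
        show ⟪w, k⟫ ≤ u from le_of_forall_pos_lt_add fun ε hε => ?_
    have := hintB k hk (-ε / β) (div_pos_of_neg_of_neg (neg_neg_of_pos hε) hβ)
    rw [mul_div_cancel₀ _ hβ.ne] at this
    linarith
  have hux : u = ⟪w, x⟫ := le_antisymm (by simpa using hsA x hx.1) (htu x hx.2)
  have hwt : w ∈ normalCone t x := fun k hk => by
    rw [inner_sub_right]; linarith [htu k hk]
  have hws : -w - β • d ∈ normalCone s x := fun y hy => by
    rw [inner_sub_left, inner_neg_left, real_inner_smul_left, inner_sub_right]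
    linarith [hsA y hy]
  have hβ' : 0 ≤ (-β)⁻¹ := inv_nonneg.mpr (neg_nonneg.mpr hβ.le)
  refine ⟨(-β)⁻¹ • (-w - β • d), smul_mem_normalCone hβ' hws, (-β)⁻¹ • w,
    smul_mem_normalCone hβ' hwt, ?_⟩
  dsimp only
  rw [← smul_add, show -w - β • d + w = (-β) • d by module, smul_smul,
    inv_mul_cancel₀ (neg_ne_zero.mpr hβ.ne), one_smul]

/-- Homogenised Farkas lemma. -/
theorem mem_hull_of_mem_normalCone_polyhedron {ι : Type*} [Fintype ι] {a : ι → E} {b : ι → ℝ}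
    {x d : E} (hx : ∀ i, ⟪a i, x⟫ ≤ b i) (hd : d ∈ normalCone {y | ∀ i, ⟪a i, y⟫ ≤ b i} x) :
    (d, ⟪d, x⟫) ∈ PointedCone.hull ℝ
      (range fun o : Option ι => o.elim ((0 : E), (1 : ℝ)) fun i => (a i, b i)) := by
  set g : Option ι → E × ℝ := fun o => o.elim (0, 1) fun i => (a i, b i)
  by_contra hnot
  let C : ProperCone ℝ (E × ℝ) := ⟨_, PointedCone.isClosed_hull_range g⟩
  obtain ⟨f, hfC, hfd⟩ := C.hyperplane_separation_point hnot
  obtain ⟨w, β, hf⟩ := StrongDual.exists_apply_prod_eq_inner_add_mul f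
  have hβ : 0 ≤ β := by
    simpa [hf, g] using hfC _ (PointedCone.subset_hull ⟨none, rfl⟩)
  have hab : ∀ i, 0 ≤ ⟪a i, w⟫ + β * b i := fun i => by
    simpa [hf, g, real_inner_comm] using hfC _ (PointedCone.subset_hull ⟨some i, rfl⟩)
  rw [hf, real_inner_comm] at hfd
  -- the separating functional `(w, β)` yields a feasible point beating `x` in direction `d`
  have hy : (1 + β)⁻¹ • (x - w) ∈ {y | ∀ i, ⟪a i, y⟫ ≤ b i} := fun i => by
    rw [real_inner_smul_right, inner_sub_right, inv_mul_le_iff₀ (by linarith), add_mul, one_mul]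
    linarith [hx i, hab i]
  have := hd _ hy
  rw [inner_sub_right, real_inner_smul_right, inner_sub_right, sub_nonpos,
    inv_mul_le_iff₀ (by linarith), add_mul, one_mul] at this
  linarith

theorem normalCone_polyhedron {ι : Type*} [Fintype ι] (a : ι → E) (b : ι → ℝ) {x : E}
    (hx : ∀ i, ⟪a i, x⟫ ≤ b i) :
    normalCone {y | ∀ i, ⟪a i, y⟫ ≤ b i} x =
      {d | ∃ z : ι → ℝ, 0 ≤ z ∧ ∑ i, z i * (⟪a i, x⟫ - b i) = 0 ∧ ∑ i, z i • a i = d} := by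
  ext d
  constructor
  · intro hd
    obtain ⟨l, hl, hsum⟩ := PointedCone.mem_hull_range_iff.mp
      (mem_hull_of_mem_normalCone_polyhedron hx hd)
    simp only [Fintype.sum_option, Option.elim, Prod.ext_iff, Prod.fst_add, Prod.snd_add,
      Prod.smul_mk, Prod.fst_sum, Prod.snd_sum, smul_zero, smul_eq_mul, mul_one, zero_add] at hsum
    obtain ⟨rfl, hsnd⟩ := hsum
    refine ⟨fun i => l (some i), fun i => hl _, le_antisymm ?_ ?_, rfl⟩
    · exact Finset.sum_nonpos fun i _ =>
        mul_nonpos_of_nonneg_of_nonpos (hl _) (sub_nonpos.mpr (hx i))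
    · have hdx : ⟪∑ i, l (some i) • a i, x⟫ = ∑ i, l (some i) * ⟪a i, x⟫ := by
        simp only [sum_inner, real_inner_smul_left]
      have : ∑ i, l (some i) * (⟪a i, x⟫ - b i) = l none := by
        simp only [mul_sub, Finset.sum_sub_distrib, ← hdx]
        linarith
      exact this ▸ hl none
  · rintro ⟨z, hz, hcomp, rfl⟩ y hy
    calc ⟪∑ i, z i • a i, y - x⟫
        = ∑ i, z i * (⟪a i, y⟫ - b i) - ∑ i, z i * (⟪a i, x⟫ - b i) := by
          simp only [sum_inner, real_inner_smul_left, inner_sub_right, ← Finset.sum_sub_distrib]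
          exact Finset.sum_congr rfl fun i _ => by ring
      _ ≤ 0 := by
        rw [hcomp, sub_zero]
        exact Finset.sum_nonpos fun i _ =>
          mul_nonpos_of_nonneg_of_nonpos (hz i) (sub_nonpos.mpr (hy i))

end NormalCone

section MulVecE

variable {n mE mI : ℕ}

theorem mulVecE_apply_eq_inner {m : ℕ} (A : Matrix (Fin m) (Fin n) ℝ)
    (x : EuclideanSpace ℝ (Fin n)) (i : Fin m) :
    mulVecE A x i = ⟪WithLp.toLp 2 (A i), x⟫ := by
  simp [mulVecE, EuclideanSpace.inner_eq_star_dotProduct, Matrix.mulVec, dotProduct_comm]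

theorem mulVecE_transpose_eq_sum {m : ℕ} (A : Matrix (Fin m) (Fin n) ℝ)
    (y : EuclideanSpace ℝ (Fin m)) :
    mulVecE Aᵀ y = ∑ i, y i • WithLp.toLp 2 (A i) := by
  ext j
  simp [mulVecE, Matrix.mulVec, dotProduct, mul_comm]

theorem convex_mulVecE_polyhedron (AE : Matrix (Fin mE) (Fin n) ℝ)
    (bE : EuclideanSpace ℝ (Fin mE)) (AI : Matrix (Fin mI) (Fin n) ℝ)
    (bI : EuclideanSpace ℝ (Fin mI)) :
    Convex ℝ {x | mulVecE AE x = bE ∧ ∀ i, mulVecE AI x i ≤ bI i} := by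
  have hP : {x | mulVecE AE x = bE ∧ ∀ i, mulVecE AI x i ≤ bI i} =
      Matrix.toLpLin 2 2 AE ⁻¹' {bE} ∩
        Matrix.toLpLin 2 2 AI ⁻¹' ⋂ i, {w | EuclideanSpace.proj i w ≤ bI i} := by
    ext x
    simp [mulVecE, Matrix.toLpLin_apply]
  rw [hP]
  exact ((convex_singleton bE).linear_preimage _).inter <| (convex_iInter fun i =>
    convex_halfSpace_le (EuclideanSpace.proj i).isLinear _).linear_preimage _

theorem normalCone_mulVecE_polyhedron (AE : Matrix (Fin mE) (Fin n) ℝ)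
    (bE : EuclideanSpace ℝ (Fin mE)) (AI : Matrix (Fin mI) (Fin n) ℝ)
    (bI : EuclideanSpace ℝ (Fin mI)) {x : EuclideanSpace ℝ (Fin n)}
    (hxE : mulVecE AE x = bE) (hxI : ∀ i, mulVecE AI x i ≤ bI i) :
    normalCone {x | mulVecE AE x = bE ∧ ∀ i, mulVecE AI x i ≤ bI i} x =
      {d | ∃ (y : EuclideanSpace ℝ (Fin mE)) (z : EuclideanSpace ℝ (Fin mI)),
        (∀ i, 0 ≤ z i) ∧ ⟪z, mulVecE AI x - bI⟫ = 0 ∧ mulVecE AEᵀ y + mulVecE AIᵀ z = d} := by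
  -- each equality row is written as a pair of opposite inequalities
  let a : (Fin mE ⊕ Fin mE) ⊕ Fin mI → EuclideanSpace ℝ (Fin n) :=
    Sum.elim (Sum.elim (fun j => WithLp.toLp 2 (AE j)) fun j => -WithLp.toLp 2 (AE j))
      fun i => WithLp.toLp 2 (AI i)
  let b : (Fin mE ⊕ Fin mE) ⊕ Fin mI → ℝ := Sum.elim (Sum.elim (bE ·) (-bE ·)) (bI ·)
  have hP : {x | mulVecE AE x = bE ∧ ∀ i, mulVecE AI x i ≤ bI i} =
      {y | ∀ k, ⟪a k, y⟫ ≤ b k} := by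
    ext y
    simp [a, b, Sum.forall, inner_neg_left, ← mulVecE_apply_eq_inner, PiLp.ext_iff,
      le_antisymm_iff, forall_and]
  have hslack (z : (Fin mE ⊕ Fin mE) ⊕ Fin mI → ℝ) :
      ∑ k, z k * (⟪a k, x⟫ - b k) = ∑ i, (mulVecE AI x i - bI i) * z (.inr i) := by
    simp [a, b, Fintype.sum_sum_type, inner_neg_left, ← mulVecE_apply_eq_inner, hxE, mul_comm]
  have hx : x ∈ {y | ∀ k, ⟪a k, y⟫ ≤ b k} := hP ▸ ⟨hxE, hxI⟩
  rw [hP, normalCone_polyhedron a b hx]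
  ext d
  simp only [mem_ofPred_eq, hslack]
  simp only [EuclideanSpace.inner_eq_star_dotProduct, dotProduct, star_trivial, PiLp.sub_apply]
  constructor
  · rintro ⟨z, hz, hcomp, rfl⟩
    refine ⟨WithLp.toLp 2 fun j => z (.inl (.inl j)) - z (.inl (.inr j)),
      WithLp.toLp 2 fun i => z (.inr i), fun i => hz _, hcomp, ?_⟩
    simp [a, Fintype.sum_sum_type, mulVecE_transpose_eq_sum, ← sub_eq_add_neg,
      ← Finset.sum_sub_distrib, ← sub_smul]
  · rintro ⟨y, z, hz, hcomp, rfl⟩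
    refine ⟨Sum.elim (Sum.elim (fun j => (y j)⁺) fun j => (y j)⁻) (z ·), ?_, hcomp, ?_⟩
    · rintro ((j | j) | i)
      exacts [posPart_nonneg _, negPart_nonneg _, hz i]
    simp [a, Fintype.sum_sum_type, mulVecE_transpose_eq_sum, ← sub_eq_add_neg,
      ← Finset.sum_sub_distrib, ← sub_smul]

end MulVecE

theorem conic_projection_kkt_general
    {n mE mI : ℕ} (K : Set (EuclideanSpace ℝ (Fin n)))
    (hKconv : Convex ℝ K)
    (hKcone : ∀ x ∈ K, ∀ t : ℝ, 0 ≤ t → t • x ∈ K)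
    (Ko : Set (EuclideanSpace ℝ (Fin n)))
    (hKo : Ko = {s | ∀ x ∈ K, ⟪s, x⟫ ≤ 0})
    (c : EuclideanSpace ℝ (Fin n))
    (AE : Matrix (Fin mE) (Fin n) ℝ) (bE : EuclideanSpace ℝ (Fin mE))
    (AI : Matrix (Fin mI) (Fin n) ℝ) (bI : EuclideanSpace ℝ (Fin mI))
    (P : Set (EuclideanSpace ℝ (Fin n)))
    (hP : P = {x | mulVecE AE x = bE ∧ ∀ i, mulVecE AI x i ≤ bI i})
    (hSlater : ∃ xb ∈ interior K, mulVecE AE xb = bE ∧ ∀ i, mulVecE AI xb i ≤ bI i)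
    (xstar : EuclideanSpace ℝ (Fin n)) :
    (xstar ∈ P ∩ K ∧ ∀ x ∈ P ∩ K, ‖c - xstar‖ ≤ ‖c - x‖) ↔
      ∃ (y : EuclideanSpace ℝ (Fin mE)) (z : EuclideanSpace ℝ (Fin mI))
        (u : EuclideanSpace ℝ (Fin n)),
        (∀ i, 0 ≤ z i) ∧ u ∈ Ko ∧
        xstar - c + u + mulVecE AEᵀ y + mulVecE AIᵀ z = 0 ∧
        mulVecE AE xstar = bE ∧
        (∀ i, mulVecE AI xstar i ≤ bI i) ∧ ⟪z, mulVecE AI xstar - bI⟫ = 0 ∧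
        xstar ∈ K ∧ ⟪u, xstar⟫ = 0 := by
  subst hP hKo
  obtain ⟨xb, hxb, hxbE, hxbI⟩ := hSlater
  have hPconv := convex_mulVecE_polyhedron AE bE AI bI
  have hslater : ({x | mulVecE AE x = bE ∧ ∀ i, mulVecE AI x i ≤ bI i} ∩ interior K).Nonempty :=
    ⟨xb, ⟨hxbE, hxbI⟩, hxb⟩
  have hKKT {x} (hxE : mulVecE AE x = bE) (hxI : ∀ i, mulVecE AI x i ≤ bI i) (hxK : x ∈ K) :=
    (forall_norm_sub_le_iff_sub_mem_normalCone (hPconv.inter hKconv) ⟨⟨hxE, hxI⟩, hxK⟩ c).trans <|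
      by rw [normalCone_inter hPconv hKconv hslater ⟨⟨hxE, hxI⟩, hxK⟩,
        normalCone_mulVecE_polyhedron AE bE AI bI hxE hxI, normalCone_eq_of_smul_mem hKcone hxK]
  constructor
  · rintro ⟨⟨⟨hxE, hxI⟩, hxK⟩, hmin⟩
    obtain ⟨_, ⟨y, z, hz, hcomp, rfl⟩, u, ⟨hu, hux⟩, hsum⟩ := (hKKT hxE hxI hxK).mp hmin
    exact ⟨y, z, u, hz, hu, by linear_combination (norm := module) hsum, hxE, hxI, hcomp, hxK, hux⟩
  · rintro ⟨y, z, u, hz, hu, hsum, hxE, hxI, hcomp, hxK, hux⟩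
    refine ⟨⟨⟨hxE, hxI⟩, hxK⟩, (hKKT hxE hxI hxK).mpr ⟨_, ⟨y, z, hz, hcomp, rfl⟩, u, ⟨hu, hux⟩, ?_⟩⟩
    linear_combination (norm := module) hsum

/-- KKT optimality conditions for the conic projection problem under the Slater
condition: `x*` is the projection of `c` onto `P ∩ K` if and only if there exist
multipliers `y ∈ ℝ^{mE}`, `z ∈ ℝ₊^{mI}` and `u ∈ K°` satisfying the
complementarity system. -/
theorem conic_projection_kkt
    {n mE mI : ℕ} (K : Set (EuclideanSpace ℝ (Fin n)))
    (hKcl : IsClosed K) (hKconv : Convex ℝ K)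
    (hKcone : ∀ x ∈ K, ∀ t : ℝ, 0 ≤ t → t • x ∈ K)
    (hKint : (interior K).Nonempty)
    (Ko : Set (EuclideanSpace ℝ (Fin n)))
    (hKo : Ko = {s | ∀ x ∈ K, ⟪s, x⟫ ≤ 0})
    (c : EuclideanSpace ℝ (Fin n))
    (AE : Matrix (Fin mE) (Fin n) ℝ) (bE : EuclideanSpace ℝ (Fin mE))
    (AI : Matrix (Fin mI) (Fin n) ℝ) (bI : EuclideanSpace ℝ (Fin mI))
    (P : Set (EuclideanSpace ℝ (Fin n)))
    (hP : P = {x | mulVecE AE x = bE ∧ ∀ i, mulVecE AI x i ≤ bI i})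
    (hSlater : ∃ xb ∈ interior K, mulVecE AE xb = bE ∧ ∀ i, mulVecE AI xb i ≤ bI i)
    (xstar : EuclideanSpace ℝ (Fin n)) :
    (xstar ∈ P ∩ K ∧ ∀ x ∈ P ∩ K, ‖c - xstar‖ ≤ ‖c - x‖) ↔
      ∃ (y : EuclideanSpace ℝ (Fin mE)) (z : EuclideanSpace ℝ (Fin mI))
        (u : EuclideanSpace ℝ (Fin n)),
        (∀ i, 0 ≤ z i) ∧ u ∈ Ko ∧
        xstar - c + u + mulVecE AEᵀ y + mulVecE AIᵀ z = 0 ∧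
        mulVecE AE xstar = bE ∧
        (∀ i, mulVecE AI xstar i ≤ bI i) ∧ ⟪z, mulVecE AI xstar - bI⟫ = 0 ∧
        xstar ∈ K ∧ ⟪u, xstar⟫ = 0 :=
  conic_projection_kkt_general K hKconv hKcone Ko hKo c AE bE AI bI P hP hSlater xstar
end

section
/- (Global convergence of the proximal algorithm.) Let S be a nonempty closed convex subset of ℝⁿ and c ∈ ℝⁿ, and assume the problem min{⟨c,x⟩ : x ∈ S} has at least one solution. Let (t_k) be a sequence of positive reals bounded away from 0 (t_k ≥ t̄ > 0 for all k), and let (ε_k) be a sequence of nonnegative reals with ∑_k ε_k < +∞. Suppose the sequence (p_k) in ℝⁿ satisfies ‖p_{k+1} − q_k‖ ≤ ε_k for all k, where q_k is the unique minimizer over x ∈ S of ⟨c,x⟩ + (1/(2t_k))‖x − p_k‖². Then (p_k) converges to a point p̄ ∈ S with ⟨c, p̄⟩ ≤ ⟨c, x⟩ for all x ∈ S, i.e., to a solution of min{⟨c,x⟩ : x ∈ S}. -/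
/-!
The first-order optimality condition of the proximal step on the convex set `S` gives the
three-point inequality `‖x - q‖² + ‖q - p‖² + 2t(⟨c,q⟩ - ⟨c,x⟩) ≤ ‖x - p‖²` for `x ∈ S`.
Taking `x` a solution shows that the iterates are quasi-Fejér monotone with respect to the
solution set: `‖p_{k+1} - x‖ ≤ ‖p_k - x‖ + ε_k`. Hence every distance `‖p_k - x‖` converges,
and then the three-point inequality forces `‖q_k - p_k‖ → 0` and `⟨c,q_k⟩ → min`, so every
cluster point of `(p_k)` is a solution. A quasi-Fejér sequence in a proper space with a
cluster point in the target set converges to it.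
-/

open scoped RealInnerProductSpace
open Filter Topology

theorem exists_tendsto_of_le_add_of_summable {d ε : ℕ → ℝ} (hd : BddBelow (Set.range d))
    (hε : Summable ε) (h : ∀ k, d (k + 1) ≤ d k + ε k) : ∃ L, Tendsto d atTop (𝓝 L) := by
  set s := fun k => ∑ i ∈ Finset.range k, ε i
  have hs : Tendsto s atTop (𝓝 (∑' i, ε i)) := hε.hasSum.tendsto_sum_nat
  obtain ⟨m, hm⟩ := hd
  obtain ⟨B, hB⟩ := hs.bddAbove_range
  have hanti : Antitone (fun k => d k - s k) := antitone_nat_of_succ_le fun k => by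
    simp only [s, Finset.sum_range_succ]
    linarith [h k]
  have hbdd : BddBelow (Set.range fun k => d k - s k) :=
    ⟨m - B, by rintro _ ⟨k, rfl⟩; linarith [hm ⟨k, rfl⟩, hB ⟨k, rfl⟩]⟩
  exact ⟨_, by simpa using (tendsto_atTop_ciInf hanti hbdd).add hs⟩

theorem tendsto_zero_of_sq_add_le_sq {d e r ε : ℕ → ℝ} {L : ℝ} (hd : Tendsto d atTop (𝓝 L))
    (hε : Tendsto ε atTop (𝓝 0)) (hd0 : ∀ k, 0 ≤ d k) (he0 : ∀ k, 0 ≤ e k) (hr0 : ∀ k, 0 ≤ r k)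
    (hsq : ∀ k, e k ^ 2 + r k ≤ d k ^ 2) (hnext : ∀ k, d (k + 1) ≤ e k + ε k) :
    Tendsto r atTop (𝓝 0) := by
  have hed : ∀ k, e k ≤ d k := fun k =>
    (sq_le_sq₀ (he0 k) (hd0 k)).1 (by linarith [hsq k, hr0 k])
  have he : Tendsto e atTop (𝓝 L) := by
    refine tendsto_of_tendsto_of_tendsto_of_le_of_le (g := fun k => d (k + 1) - ε k) ?_ hd
      (fun k => by linarith [hnext k]) hed
    simpa using ((tendsto_add_atTop_iff_nat 1).2 hd).sub hε
  refine squeeze_zero hr0 (fun k => le_sub_iff_add_le'.2 (hsq k)) ?_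
  simpa using (hd.pow 2).sub (he.pow 2)

def QuasiFejerMonotone {E : Type*} [PseudoMetricSpace E] (u : ℕ → E) (ε : ℕ → ℝ) (Z : Set E) :
    Prop :=
  ∀ z ∈ Z, ∀ k, dist (u (k + 1)) z ≤ dist (u k) z + ε k

namespace QuasiFejerMonotone

variable {E : Type*} [PseudoMetricSpace E] {u : ℕ → E} {ε : ℕ → ℝ} {Z : Set E}

theorem exists_tendsto_dist (h : QuasiFejerMonotone u ε Z) (hε : Summable ε) {z : E}
    (hz : z ∈ Z) : ∃ L, Tendsto (fun k => dist (u k) z) atTop (𝓝 L) :=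
  exists_tendsto_of_le_add_of_summable ⟨0, by rintro _ ⟨k, rfl⟩; exact dist_nonneg⟩ hε (h z hz)

theorem exists_tendsto [ProperSpace E] (h : QuasiFejerMonotone u ε Z) (hε : Summable ε)
    (hZ : Z.Nonempty) (hclust : ∀ a, MapClusterPt a atTop u → a ∈ Z) :
    ∃ a ∈ Z, Tendsto u atTop (𝓝 a) := by
  obtain ⟨z, hz⟩ := hZ
  obtain ⟨B, hB⟩ := (h.exists_tendsto_dist hε hz).choose_spec.bddAbove_range
  obtain ⟨a, -, ha⟩ := (isCompact_closedBall z B).exists_mapClusterPt (f := atTop) (u := u)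
    (tendsto_principal.2 (.of_forall fun k => hB ⟨k, rfl⟩))
  obtain ⟨φ, hφ, huφ⟩ := ha.tendsto_subseq
  obtain ⟨L, hL⟩ := h.exists_tendsto_dist hε (hclust a ha)
  obtain rfl : L = 0 :=
    tendsto_nhds_unique (hL.comp hφ.tendsto_atTop) (tendsto_iff_dist_tendsto_zero.1 huφ)
  exact ⟨a, hclust a ha, tendsto_iff_dist_tendsto_zero.2 hL⟩

end QuasiFejerMonotone

theorem dist_succ_le_of_norm_sub_le {E : Type*} [SeminormedAddCommGroup E] {p q : ℕ → E}
    {ε : ℕ → ℝ} (hp : ∀ k, ‖p (k + 1) - q k‖ ≤ ε k) (w : E) (k : ℕ) :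
    dist (p (k + 1)) w ≤ dist (q k) w + ε k := by
  linarith [dist_triangle (p (k + 1)) (q k) w, dist_eq_norm (p (k + 1)) (q k), hp k]

section Prox

variable {E : Type*} [NormedAddCommGroup E] [InnerProductSpace ℝ E] {S : Set E} {c : E}

def linearMinimizers (S : Set E) (c : E) : Set E :=
  {w ∈ S | ∀ x ∈ S, ⟪c, w⟫ ≤ ⟪c, x⟫}

theorem IsMinOn.prox_inner_nonneg (hS : Convex ℝ S) {p q : E} {t : ℝ}
    (hmin : IsMinOn (fun x => ⟪c, x⟫ + 1 / (2 * t) * ‖x - p‖ ^ 2) S q) (hq : q ∈ S)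
    {x : E} (hx : x ∈ S) : 0 ≤ ⟪c, x - q⟫ + t⁻¹ * ⟪q - p, x - q⟫ := by
  have hderiv := (innerSL ℝ c).hasFDerivAt.add
    (((hasFDerivAt_id q).sub_const p).norm_sq.const_mul (1 / (2 * t)))
  have := hmin.localize.hasFDerivWithinAt_nonneg hderiv.hasFDerivWithinAt
    (sub_mem_posTangentConeAt_of_segment_subset (hS.segment_subset hq hx))
  convert this using 1
  simp only [id_eq, ContinuousLinearMap.comp_id, add_apply, smul_apply, coe_innerSL_apply,
    inner_sub_left, inner_sub_right, nsmul_eq_mul, smul_eq_mul]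
  ring

theorem IsMinOn.prox_three_point (hS : Convex ℝ S) {p q : E} {t : ℝ} (ht : 0 < t)
    (hmin : IsMinOn (fun x => ⟪c, x⟫ + 1 / (2 * t) * ‖x - p‖ ^ 2) S q) (hq : q ∈ S)
    {x : E} (hx : x ∈ S) :
    ‖x - q‖ ^ 2 + ‖q - p‖ ^ 2 + 2 * t * (⟪c, q⟫ - ⟪c, x⟫) ≤ ‖x - p‖ ^ 2 := by
  have hopt := mul_nonneg ht.le (hmin.prox_inner_nonneg hS hq hx)
  rw [mul_add, ← mul_assoc, mul_inv_cancel₀ ht.ne', one_mul, inner_sub_right] at hopt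
  have hsplit : ‖x - p‖ ^ 2 = ‖q - p‖ ^ 2 + 2 * ⟪q - p, x - q⟫ + ‖x - q‖ ^ 2 := by
    rw [← norm_add_sq_real, sub_add_sub_cancel']
  linarith

theorem IsMinOn.prox_dist_le (hS : Convex ℝ S) {p q : E} {t : ℝ} (ht : 0 < t)
    (hmin : IsMinOn (fun x => ⟪c, x⟫ + 1 / (2 * t) * ‖x - p‖ ^ 2) S q) (hq : q ∈ S)
    {w : E} (hw : w ∈ S) (hcw : ⟪c, w⟫ ≤ ⟪c, q⟫) : dist q w ≤ dist p w := by
  rw [dist_comm, dist_comm p, dist_eq_norm, dist_eq_norm,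
    ← sq_le_sq₀ (norm_nonneg _) (norm_nonneg _)]
  nlinarith [hmin.prox_three_point hS ht hq hw, sq_nonneg ‖q - p‖,
    mul_nonneg ht.le (sub_nonneg.2 hcw)]

variable {t ε : ℕ → ℝ} {p q : ℕ → E}

theorem quasiFejerMonotone_prox (hS : Convex ℝ S) (ht : ∀ k, 0 < t k)
    (hmin : ∀ k, IsMinOn (fun x => ⟪c, x⟫ + 1 / (2 * t k) * ‖x - p k‖ ^ 2) S (q k))
    (hqS : ∀ k, q k ∈ S) (hp : ∀ k, ‖p (k + 1) - q k‖ ≤ ε k) :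
    QuasiFejerMonotone p ε (linearMinimizers S c) := fun w ⟨hwS, hw⟩ k =>
  (dist_succ_le_of_norm_sub_le hp w k).trans <|
    add_le_add ((hmin k).prox_dist_le hS (ht k) (hqS k) hwS (hw _ (hqS k))) le_rfl

theorem tendsto_prox_residual (hS : Convex ℝ S) (ht : ∀ k, 0 < t k)
    (hmin : ∀ k, IsMinOn (fun x => ⟪c, x⟫ + 1 / (2 * t k) * ‖x - p k‖ ^ 2) S (q k))
    (hqS : ∀ k, q k ∈ S) (hp : ∀ k, ‖p (k + 1) - q k‖ ≤ ε k) (hε : Summable ε)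
    {z : E} (hz : z ∈ linearMinimizers S c) :
    Tendsto (fun k => ‖q k - p k‖ ^ 2 + 2 * t k * (⟪c, q k⟫ - ⟪c, z⟫)) atTop (𝓝 0) := by
  obtain ⟨L, hL⟩ := (quasiFejerMonotone_prox hS ht hmin hqS hp).exists_tendsto_dist hε hz
  refine tendsto_zero_of_sq_add_le_sq hL hε.tendsto_atTop_zero (fun _ => dist_nonneg)
    (fun _ => dist_nonneg) (fun k => ?_) (fun k => ?_) (dist_succ_le_of_norm_sub_le hp z)
  · have := ht k
    have := sub_nonneg.2 (hz.2 _ (hqS k))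
    positivity
  · simpa only [dist_comm _ z, dist_eq_norm, add_assoc] using
      (hmin k).prox_three_point hS (ht k) (hqS k) hz.1

end Prox

theorem proximal_algorithm_global_convergence_general
    {n : ℕ} (S : Set (EuclideanSpace ℝ (Fin n)))
    (hScl : IsClosed S) (hSconv : Convex ℝ S)
    (c : EuclideanSpace ℝ (Fin n))
    (hsol : ∃ xstar ∈ S, ∀ x ∈ S, ⟪c, xstar⟫ ≤ ⟪c, x⟫)
    (t : ℕ → ℝ) (tbar : ℝ) (htbar : 0 < tbar) (ht : ∀ k, tbar ≤ t k)
    (ε : ℕ → ℝ) (hεsum : Summable ε)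
    (p q : ℕ → EuclideanSpace ℝ (Fin n))
    (hq : ∀ k, q k ∈ S ∧
      (∀ x ∈ S, ⟪c, q k⟫ + (1 / (2 * t k)) * ‖q k - p k‖ ^ 2
          ≤ ⟪c, x⟫ + (1 / (2 * t k)) * ‖x - p k‖ ^ 2) ∧
      ∀ x ∈ S, ⟪c, x⟫ + (1 / (2 * t k)) * ‖x - p k‖ ^ 2
          = ⟪c, q k⟫ + (1 / (2 * t k)) * ‖q k - p k‖ ^ 2 → x = q k)
    (hp : ∀ k, ‖p (k + 1) - q k‖ ≤ ε k) :
    ∃ pbar, pbar ∈ S ∧ (∀ x ∈ S, ⟪c, pbar⟫ ≤ ⟪c, x⟫) ∧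
      Filter.Tendsto p Filter.atTop (nhds pbar) := by
  obtain ⟨z, hz⟩ : (linearMinimizers S c).Nonempty := hsol
  have htpos k : 0 < t k := htbar.trans_le (ht k)
  have hmin k : IsMinOn (fun x => ⟪c, x⟫ + 1 / (2 * t k) * ‖x - p k‖ ^ 2) S (q k) :=
    isMinOn_iff.2 (hq k).2.1
  have hqS k : q k ∈ S := (hq k).1
  have hgap k : 0 ≤ ⟪c, q k⟫ - ⟪c, z⟫ := sub_nonneg.2 (hz.2 _ (hqS k))
  have hres := tendsto_prox_residual hSconv htpos hmin hqS hp hεsum hz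
  have hpq : Tendsto (fun k => dist (p k) (q k)) atTop (𝓝 0) := by
    refine squeeze_zero (fun _ => dist_nonneg) (fun k => ?_) (by simpa using hres.sqrt)
    rw [dist_comm, dist_eq_norm]
    exact Real.le_sqrt_of_sq_le (le_add_of_nonneg_right (by nlinarith [htpos k, hgap k]))
  have hval : Tendsto (fun k => ⟪c, q k⟫) atTop (𝓝 ⟪c, z⟫) := by
    refine tendsto_sub_nhds_zero_iff.1 (squeeze_zero hgap (fun k => ?_)
      (by simpa using hres.div_const (2 * tbar)))
    rw [le_div_iff₀ (by positivity)]
    nlinarith [ht k, hgap k, sq_nonneg ‖q k - p k‖]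
  obtain ⟨a, ⟨haS, ha⟩, hlim⟩ := (quasiFejerMonotone_prox hSconv htpos hmin hqS hp).exists_tendsto
    hεsum ⟨z, hz⟩ fun a ha => by
      obtain ⟨φ, hφ, hpφ⟩ := ha.tendsto_subseq
      have hqφ := hpφ.congr_dist (hpq.comp hφ.tendsto_atTop)
      refine ⟨hScl.mem_of_tendsto hqφ (.of_forall fun j => hqS _), ?_⟩
      rw [tendsto_nhds_unique (tendsto_const_nhds.inner hqφ) (hval.comp hφ.tendsto_atTop)]
      exact hz.2
  exact ⟨a, haS, ha, hlim⟩

/-- Global convergence of the (inexact) proximal algorithm for the linear problem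
`min {⟨c,x⟩ : x ∈ S}` over a nonempty closed convex set `S`: if the problem has a
solution, the prox-parameters `t k` are bounded away from `0`, the errors `ε k` are
nonnegative and summable, and `‖p (k+1) − q k‖ ≤ ε k` where `q k` is the unique
minimizer over `S` of `x ↦ ⟨c,x⟩ + ‖x − p k‖²/(2 t k)`, then `(p k)` converges to a
solution of `min {⟨c,x⟩ : x ∈ S}`. -/
theorem proximal_algorithm_global_convergence
    {n : ℕ} (S : Set (EuclideanSpace ℝ (Fin n)))
    (hSne : S.Nonempty) (hScl : IsClosed S) (hSconv : Convex ℝ S)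
    (c : EuclideanSpace ℝ (Fin n))
    (hsol : ∃ xstar ∈ S, ∀ x ∈ S, ⟪c, xstar⟫ ≤ ⟪c, x⟫)
    (t : ℕ → ℝ) (tbar : ℝ) (htbar : 0 < tbar) (ht : ∀ k, tbar ≤ t k)
    (ε : ℕ → ℝ) (hεnn : ∀ k, 0 ≤ ε k) (hεsum : Summable ε)
    (p q : ℕ → EuclideanSpace ℝ (Fin n))
    (hq : ∀ k, q k ∈ S ∧
      (∀ x ∈ S, ⟪c, q k⟫ + (1 / (2 * t k)) * ‖q k - p k‖ ^ 2
          ≤ ⟪c, x⟫ + (1 / (2 * t k)) * ‖x - p k‖ ^ 2) ∧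
      ∀ x ∈ S, ⟪c, x⟫ + (1 / (2 * t k)) * ‖x - p k‖ ^ 2
          = ⟪c, q k⟫ + (1 / (2 * t k)) * ‖q k - p k‖ ^ 2 → x = q k)
    (hp : ∀ k, ‖p (k + 1) - q k‖ ≤ ε k) :
    ∃ pbar, pbar ∈ S ∧ (∀ x ∈ S, ⟪c, pbar⟫ ≤ ⟪c, x⟫) ∧
      Filter.Tendsto p Filter.atTop (nhds pbar) :=
  proximal_algorithm_global_convergence_general S hScl hSconv c hsol t tbar htbar ht ε hεsum p q hq
    hp
end

section
/- Let K be a closed convex cone in ℝⁿ with nonempty interior and polar cone K° = {s : ⟨s,x⟩ ≤ 0 for all x ∈ K}, let A ∈ ℝ^{m×n}, b ∈ ℝᵐ, c ∈ ℝⁿ, t > 0, and assume the Slater condition: there exists x̄ in the interior of K with Ax̄ = b. Then for every p ∈ ℝⁿ, the augmented Lagrangian dual value equals the Moreau–Yosida value: sup over y ∈ ℝᵐ and u ∈ K° of [⟨b, y⟩ − ⟨p, Aᵀy − u − c⟩ − (t/2)‖Aᵀy − u − c‖²] = inf over x ∈ K with Ax = b of [⟨c, x⟩ + (1/(2t))‖x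 − p‖²]. -/
open scoped Matrix RealInnerProductSpace InnerProduct
open Set

/-
Write `f = proxObjective c p t` and `Θ = augLagrangian`. The identity
`f x + ⟪y, b - A x⟫ - Θ y u = ‖x - p - t (Aᵀ y - u - c)‖² / (2t) - ⟪x, u⟫`
gives weak duality. Conversely, for fixed `y` the Moreau decomposition of `p + t (Aᵀ y - c)` along
`K` and `K°` produces `x ∈ K` and `u ∈ K°` for which the right-hand side vanishes, so `Θ y u` is a
value of the Lagrangian `f + ⟪y, b - A ·⟫` on `K`. It remains to find, for each `a` below the
primal value, a multiplier `y` with `a < f + ⟪y, b - A ·⟫` on `K`. As `f` has compact sublevel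
sets, `(b, a)` lies outside the closure of the image of the epigraph of `f` on `K` under
`(x, s) ↦ (A x, s)`; a strictly separating hyperplane cannot be vertical since the problem is
feasible, and its slope gives `y`.
-/

section

variable {E F : Type*} [NormedAddCommGroup E] [InnerProductSpace ℝ E]
  [NormedAddCommGroup F] [InnerProductSpace ℝ F]

theorem exists_moreau_decomposition {K : Set E} (hKc : IsComplete K) (hKconv : Convex ℝ K)
    (hKcone : ∀ x ∈ K, ∀ s : ℝ, 0 ≤ s → s • x ∈ K) (hKne : K.Nonempty) (z : E) :
    ∃ x ∈ K, ∃ v : E, (∀ w ∈ K, ⟪v, w⟫ ≤ 0) ∧ ⟪x, v⟫ = 0 ∧ x + v = z := by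
  obtain ⟨x, hxK, hx⟩ := exists_norm_eq_iInf_of_complete_convex hKne hKc hKconv z
  have hproj := (norm_eq_iInf_iff_real_inner_le_zero hKconv hxK).1 hx
  have horth : ⟪z - x, x⟫ = 0 := by
    have h2 := hproj _ (hKcone x hxK 2 zero_le_two)
    have h0 := hproj _ (by simpa using hKcone x hxK 0 le_rfl)
    rw [two_smul, add_sub_cancel_right] at h2
    rw [zero_sub, inner_neg_right] at h0
    linarith
  refine ⟨x, hxK, z - x, fun w hw => ?_, by rwa [real_inner_comm], add_sub_cancel x z⟩
  simpa [inner_sub_right, horth] using hproj w hw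

noncomputable def proxObjective (c p : E) (t : ℝ) (x : E) : ℝ :=
  ⟪c, x⟫ + 1 / (2 * t) * ‖x - p‖ ^ 2

noncomputable def augLagrangian [CompleteSpace E] [CompleteSpace F] (L : E →L[ℝ] F) (b : F)
    (c p : E) (t : ℝ) (y : F) (u : E) : ℝ :=
  ⟪b, y⟫ - ⟪p, (L†) y - u - c⟫ - t / 2 * ‖(L†) y - u - c‖ ^ 2

section Prox

variable (c p : E) {t : ℝ}

theorem proxObjective_eq_sq_norm_add (ht : t ≠ 0) (x : E) :
    proxObjective c p t x = 1 / (2 * t) * ‖x - (p - t • c)‖ ^ 2 + (⟪c, p⟫ - t / 2 * ‖c‖ ^ 2) := by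
  rw [proxObjective, sub_sub_eq_add_sub, add_sub_right_comm, norm_add_sq_real, norm_smul,
    real_inner_smul_right, inner_sub_left, Real.norm_eq_abs, mul_pow, sq_abs, real_inner_comm x]
  field_simp
  rw [real_inner_comm p c]
  ring

theorem continuous_proxObjective : Continuous (proxObjective c p t) :=
  (continuous_const.inner continuous_id).add
    (continuous_const.mul ((continuous_id.sub continuous_const).norm.pow 2))

theorem convexOn_proxObjective (ht : 0 ≤ t) : ConvexOn ℝ univ (proxObjective c p t) := by
  have hsq : ConvexOn ℝ univ fun x : E => ‖x - p‖ ^ 2 := by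
    simpa [Function.comp_def, sub_eq_add_neg] using
      ((convexOn_norm (E := E) convex_univ).pow (fun _ _ => norm_nonneg _) 2).translate_left (-p)
  exact ((innerₗ E c).convexOn convex_univ).add (hsq.smul (by positivity))

theorem isCompact_inter_proxObjective_le [ProperSpace E] {K : Set E} (hK : IsClosed K)
    (ht : 0 < t) (r : ℝ) : IsCompact (K ∩ {x | proxObjective c p t x ≤ r}) := by
  refine Metric.isCompact_of_isClosed_isBounded
    (hK.inter (isClosed_le (continuous_proxObjective c p) continuous_const))
    ((Metric.isBounded_closedBall (x := p - t • c)
      (r := √(2 * t * (r - (⟪c, p⟫ - t / 2 * ‖c‖ ^ 2))))).subset ?_)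
  rintro x ⟨-, hx⟩
  rw [mem_ofPred_eq, proxObjective_eq_sq_norm_add c p ht.ne'] at hx
  rw [Metric.mem_closedBall, dist_eq_norm, ← abs_norm]
  apply Real.abs_le_sqrt
  rw [← div_le_iff₀' (by positivity)]
  linarith [show 1 / (2 * t) * ‖x - (p - t • c)‖ ^ 2 = ‖x - (p - t • c)‖ ^ 2 / (2 * t) by ring]

end Prox

section Duality

variable [CompleteSpace E] [CompleteSpace F] (L : E →L[ℝ] F) (b : F) (c p : E) {t : ℝ}

theorem proxObjective_add_inner_sub_augLagrangian (ht : t ≠ 0) (x u : E) (y : F) :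
    proxObjective c p t x + ⟪y, b - L x⟫ - augLagrangian L b c p t y u
      = 1 / (2 * t) * ‖x - p - t • ((L†) y - u - c)‖ ^ 2 - ⟪x, u⟫ := by
  unfold proxObjective augLagrangian
  set d := (L†) y - u - c with hd
  have hLx : ⟪y, L x⟫ = ⟪x, d⟫ + ⟪x, u⟫ + ⟪x, c⟫ := by
    rw [real_inner_comm, ← ContinuousLinearMap.adjoint_inner_right, ← inner_add_right,
      ← inner_add_right, hd]
    congr 1
    abel
  rw [inner_sub_right, hLx, norm_sub_sq_real (x - p), real_inner_smul_right, inner_sub_left,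
    norm_smul, Real.norm_eq_abs, mul_pow, sq_abs, real_inner_comm b, real_inner_comm c]
  field_simp
  ring

theorem augLagrangian_le_proxObjective (ht : 0 < t) {x u : E} (y : F) (hx : L x = b)
    (hux : ⟪x, u⟫ ≤ 0) : augLagrangian L b c p t y u ≤ proxObjective c p t x := by
  have h := proxObjective_add_inner_sub_augLagrangian L b c p ht.ne' x u y
  rw [hx, sub_self, inner_zero_right, add_zero] at h
  have : 0 ≤ 1 / (2 * t) * ‖x - p - t • ((L†) y - u - c)‖ ^ 2 := by positivity
  linarith

theorem exists_augLagrangian_eq_proxObjective_add_inner {K : Set E} (hKc : IsComplete K)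
    (hKconv : Convex ℝ K) (hKcone : ∀ x ∈ K, ∀ s : ℝ, 0 ≤ s → s • x ∈ K) (hKne : K.Nonempty)
    (ht : 0 < t) (y : F) :
    ∃ u : E, (∀ w ∈ K, ⟪u, w⟫ ≤ 0) ∧
      ∃ x ∈ K, augLagrangian L b c p t y u = proxObjective c p t x + ⟪y, b - L x⟫ := by
  obtain ⟨x, hxK, v, hvK, hxv, hz⟩ :=
    exists_moreau_decomposition hKc hKconv hKcone hKne (p + t • ((L†) y - c))
  refine ⟨t⁻¹ • v, fun w hw => ?_, x, hxK, ?_⟩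
  · rw [real_inner_smul_left]
    exact mul_nonpos_of_nonneg_of_nonpos (inv_nonneg.2 ht.le) (hvK w hw)
  have hd : x - p - t • ((L†) y - t⁻¹ • v - c) = 0 := by
    rw [sub_right_comm _ (t⁻¹ • v), smul_sub _ _ (t⁻¹ • v), smul_smul, mul_inv_cancel₀ ht.ne',
      one_smul]
    linear_combination (norm := module) hz
  have h := proxObjective_add_inner_sub_augLagrangian L b c p ht.ne' x (t⁻¹ • v) y
  rw [hd, real_inner_smul_right, hxv, norm_zero] at h
  linarith

end Duality

section Separation

variable {K : Set E} {f : E → ℝ} (L : E →L[ℝ] F) {b : F} {a : ℝ}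

theorem notMem_closure_image_epigraph (hsub : ∀ r, IsCompact (K ∩ {x | f x ≤ r}))
    (ha : ∀ x ∈ K, L x = b → a < f x) :
    (b, a) ∉
      closure (L.prodMap (ContinuousLinearMap.id ℝ ℝ) '' {q : E × ℝ | q.1 ∈ K ∧ f q.1 ≤ q.2}) := by
  intro hmem
  set C : {δ : ℝ // 0 < δ} → Set E := fun δ => K ∩ {x | f x ≤ a + δ} ∩ {x | ‖L x - b‖ ≤ δ}
  have hCcpt : ∀ δ, IsCompact (C δ) := fun δ =>
    (hsub _).inter_right (isClosed_le (L.continuous.sub continuous_const).norm continuous_const)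
  have hCne : ∀ δ, (C δ).Nonempty := by
    intro δ
    obtain ⟨_, ⟨⟨x, s⟩, ⟨hxK, hfs⟩, rfl⟩, hdist⟩ := Metric.mem_closure_iff.1 hmem δ δ.2
    rw [Prod.dist_eq, max_lt_iff, dist_comm, dist_eq_norm, Real.dist_eq, abs_lt] at hdist
    simp only [ContinuousLinearMap.coe_prodMap', ContinuousLinearMap.coe_id', Prod.map_apply,
      id_eq] at hdist hfs
    exact ⟨x, ⟨hxK, by simp only [mem_ofPred_eq]; linarith⟩, hdist.1.le⟩
  have hCmono : Monotone C := fun δ ε hδε x ⟨⟨hxK, hfx⟩, hLx⟩ =>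
    ⟨⟨hxK, le_trans hfx (add_le_add_right (Subtype.coe_le_coe.2 hδε) a)⟩,
      le_trans hLx (Subtype.coe_le_coe.2 hδε)⟩
  obtain ⟨x, hx⟩ := IsCompact.nonempty_iInter_of_directed_nonempty_isCompact_isClosed C
    hCmono.directed_ge hCne hCcpt fun δ => (hCcpt δ).isClosed
  rw [mem_iInter] at hx
  have hfx : f x ≤ a := le_of_forall_pos_le_add fun δ hδ => (hx ⟨δ, hδ⟩).1.2
  have hLx : L x = b := by
    rw [← sub_eq_zero, ← norm_le_zero_iff]
    exact le_of_forall_pos_le_add fun δ hδ => by simpa using (hx ⟨δ, hδ⟩).2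
  exact (ha x (hx ⟨1, one_pos⟩).1.1 hLx).not_ge hfx

theorem exists_lt_add_inner_of_lt [CompleteSpace F] (hf : ConvexOn ℝ K f)
    (hsub : ∀ r, IsCompact (K ∩ {x | f x ≤ r})) (hfeas : ∃ x ∈ K, L x = b)
    (ha : ∀ x ∈ K, L x = b → a < f x) : ∃ y : F, ∀ x ∈ K, a < f x + ⟪y, b - L x⟫ := by
  obtain ⟨xb, hxbK, hLxb⟩ := hfeas
  obtain ⟨φ, r, hφb, hφS⟩ := geometric_hahn_banach_point_closed
    ((hf.convex_epigraph.linear_image _).closure) isClosed_closure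
    (notMem_closure_image_epigraph L hsub ha)
  have hφS' : ∀ x ∈ K, ∀ s, f x ≤ s → r < φ (L x, s) := fun x hx s hs =>
    hφS _ (subset_closure ⟨(x, s), ⟨hx, hs⟩, rfl⟩)
  set ψ := φ.comp (ContinuousLinearMap.inl ℝ F ℝ)
  set lam := φ (0, 1)
  have hφ : ∀ v s, φ (v, s) = ψ v + s * lam := by
    intro v s
    rw [← smul_eq_mul, ← map_smul, ContinuousLinearMap.comp_apply, ContinuousLinearMap.inl_apply,
      ← map_add]
    simp
  rw [hφ] at hφb
  have hlam : 0 < lam := by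
    have h := hφS' xb hxbK (max (f xb) a) (le_max_left _ _)
    rw [hLxb, hφ] at h
    nlinarith [le_max_right (f xb) a]
  refine ⟨-lam⁻¹ • (InnerProductSpace.toDual ℝ F).symm ψ, fun x hx => ?_⟩
  have h := hφS' x hx (f x) le_rfl
  rw [hφ] at h
  rw [real_inner_smul_left, InnerProductSpace.toDual_symm_apply, map_sub]
  field_simp
  linarith

end Separation

theorem sSup_augLagrangian_eq_sInf_proxObjective [FiniteDimensional ℝ E] [CompleteSpace F]
    {K : Set E} (hKcl : IsClosed K) (hKconv : Convex ℝ K)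
    (hKcone : ∀ x ∈ K, ∀ s : ℝ, 0 ≤ s → s • x ∈ K) (L : E →L[ℝ] F) (b : F) (c p : E) {t : ℝ}
    (ht : 0 < t) (hfeas : ∃ x ∈ K, L x = b) :
    sSup {v : ℝ | ∃ (y : F) (u : E), (∀ w ∈ K, ⟪u, w⟫ ≤ 0) ∧ v = augLagrangian L b c p t y u}
      = sInf {v : ℝ | ∃ x ∈ K, L x = b ∧ v = proxObjective c p t x} := by
  set D := {v : ℝ | ∃ (y : F) (u : E), (∀ w ∈ K, ⟪u, w⟫ ≤ 0) ∧ v = augLagrangian L b c p t y u}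
  set P := {v : ℝ | ∃ x ∈ K, L x = b ∧ v = proxObjective c p t x}
  obtain ⟨xb, hxbK, hLxb⟩ := hfeas
  have hweak : ∀ v ∈ D, ∀ w ∈ P, v ≤ w := by
    rintro _ ⟨y, u, hu, rfl⟩ _ ⟨x, hx, hLx, rfl⟩
    exact augLagrangian_le_proxObjective L b c p ht y hLx (by rw [real_inner_comm]; exact hu x hx)
  have hDne : D.Nonempty := ⟨_, 0, 0, fun _ _ => by simp, rfl⟩
  have hPne : P.Nonempty := ⟨_, xb, hxbK, hLxb, rfl⟩
  refine le_antisymm (csSup_le hDne fun v hv => le_csInf hPne (hweak v hv))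
    (le_of_forall_lt fun a ha => ?_)
  have hbelow : ∀ x ∈ K, L x = b → a < proxObjective c p t x := fun x hx hLx =>
    ha.trans_le (csInf_le ⟨_, hweak _ hDne.some_mem⟩ ⟨x, hx, hLx, rfl⟩)
  obtain ⟨y, hy⟩ := exists_lt_add_inner_of_lt L
    ((convexOn_proxObjective c p ht.le).subset (subset_univ K) hKconv)
    (isCompact_inter_proxObjective_le c p hKcl ht) ⟨xb, hxbK, hLxb⟩ hbelow
  obtain ⟨u, hu, x, hx, hux⟩ := exists_augLagrangian_eq_proxObjective_add_inner L b c p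
    hKcl.isComplete hKconv hKcone ⟨xb, hxbK⟩ ht y
  exact (hy x hx).trans_le (hux ▸ le_csSup ⟨_, fun v hv => hweak v hv _ hPne.some_mem⟩
    ⟨y, u, hu, rfl⟩)

end

theorem mulVecE_transpose {m n : ℕ} (A : Matrix (Fin m) (Fin n) ℝ) :
    mulVecE Aᵀ = ((LinearMap.toContinuousLinearMap (Matrix.toEuclideanLin A))† : _ → _) := by
  rw [← LinearMap.adjoint_toContinuousLinearMap, ← Matrix.toEuclideanLin_conjTranspose_eq_adjoint,
    Matrix.conjTranspose_eq_transpose_of_trivial]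
  rfl

theorem augmented_lagrangian_eq_moreau_yosida_general
    {m n : ℕ} (K : Set (EuclideanSpace ℝ (Fin n)))
    (hKcl : IsClosed K) (hKconv : Convex ℝ K)
    (hKcone : ∀ x ∈ K, ∀ s : ℝ, 0 ≤ s → s • x ∈ K)
    (Ko : Set (EuclideanSpace ℝ (Fin n)))
    (hKo : Ko = {s | ∀ x ∈ K, ⟪s, x⟫ ≤ 0})
    (A : Matrix (Fin m) (Fin n) ℝ) (b : EuclideanSpace ℝ (Fin m))
    (c : EuclideanSpace ℝ (Fin n)) (t : ℝ) (ht : 0 < t)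
    (hSlater : ∃ xb ∈ interior K, mulVecE A xb = b) :
    ∀ p : EuclideanSpace ℝ (Fin n),
      sSup {v : ℝ | ∃ (y : EuclideanSpace ℝ (Fin m)) (u : EuclideanSpace ℝ (Fin n)),
          u ∈ Ko ∧
          v = ⟪b, y⟫ - ⟪p, mulVecE Aᵀ y - u - c⟫
              - (t / 2) * ‖mulVecE Aᵀ y - u - c‖ ^ 2}
        = sInf {v : ℝ | ∃ x ∈ K, mulVecE A x = b ∧
            v = ⟪c, x⟫ + (1 / (2 * t)) * ‖x - p‖ ^ 2} := by
  intro p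
  obtain ⟨xb, hxb, hAxb⟩ := hSlater
  subst hKo
  rw [mulVecE_transpose]
  exact sSup_augLagrangian_eq_sInf_proxObjective hKcl hKconv hKcone _ b c p ht
    ⟨xb, interior_subset hxb, hAxb⟩

/-- Under the Slater condition, the augmented Lagrangian dual value of the linear
conic problem equals the Moreau–Yosida value: for every `p`,
`sup_{y, u ∈ K°} [⟨b,y⟩ − ⟨p, Aᵀy − u − c⟩ − (t/2)‖Aᵀy − u − c‖²]
  = inf_{x ∈ K, Ax = b} [⟨c,x⟩ + ‖x − p‖²/(2t)]`. -/
theorem augmented_lagrangian_eq_moreau_yosida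
    {m n : ℕ} (K : Set (EuclideanSpace ℝ (Fin n)))
    (hKcl : IsClosed K) (hKconv : Convex ℝ K)
    (hKcone : ∀ x ∈ K, ∀ s : ℝ, 0 ≤ s → s • x ∈ K)
    (hKint : (interior K).Nonempty)
    (Ko : Set (EuclideanSpace ℝ (Fin n)))
    (hKo : Ko = {s | ∀ x ∈ K, ⟪s, x⟫ ≤ 0})
    (A : Matrix (Fin m) (Fin n) ℝ) (b : EuclideanSpace ℝ (Fin m))
    (c : EuclideanSpace ℝ (Fin n)) (t : ℝ) (ht : 0 < t)
    (hSlater : ∃ xb ∈ interior K, mulVecE A xb = b) :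
    ∀ p : EuclideanSpace ℝ (Fin n),
      sSup {v : ℝ | ∃ (y : EuclideanSpace ℝ (Fin m)) (u : EuclideanSpace ℝ (Fin n)),
          u ∈ Ko ∧
          v = ⟪b, y⟫ - ⟪p, mulVecE Aᵀ y - u - c⟫
              - (t / 2) * ‖mulVecE Aᵀ y - u - c‖ ^ 2}
        = sInf {v : ℝ | ∃ x ∈ K, mulVecE A x = b ∧
            v = ⟪c, x⟫ + (1 / (2 * t)) * ‖x - p‖ ^ 2} :=
  augmented_lagrangian_eq_moreau_yosida_general K hKcl hKconv hKcone Ko hKo A b c t ht hSlater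
end

section
/- (Convergence of Dykstra's corrected alternating projections.) Let K be a nonempty closed convex subset of ℝⁿ, let 𝒜 = {x ∈ ℝⁿ : Ax = b} be a nonempty affine subspace (A ∈ ℝ^{m×n}, b ∈ ℝᵐ), and assume K ∩ 𝒜 ≠ ∅. Given c ∈ ℝⁿ, define sequences by z₀ = c and, for k ≥ 0: x_{k+1} = proj_K(z_k), y_{k+1} = proj_𝒜(x_{k+1}), z_{k+1} = z_k − (x_{k+1} − y_{k+1}). Then the sequence (x_k) converges to proj_{K∩𝒜}(c), the projection of c onto the intersection K ∩ 𝒜. -/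
/-!
Since `𝒜` is affine, every residual `x k - y k` is orthogonal to the direction of `𝒜`, and hence
so is the accumulated correction `c - z k`. With `s` the projection of `c` onto `K ∩ 𝒜`, the
potential `‖y k - s‖² + 2⟪z k - x k, x k - s⟫` is nonnegative and drops by at least
`‖x (k+1) - y (k+1)‖²` at each step, so it converges and the residuals tend to `0`. The quantity
`-⟪c - z k, x k - y k⟫` is bounded by the decrements of `‖c - z (k+1)‖² + potential`, so it is
frequently small. At such times a cluster point `a` of the bounded sequence `x` lies in `K ∩ 𝒜`
and satisfies `⟪c - a, s - a⟫ ≤ 0`, which forces `a = s` and drives the potential to `0` along a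
subsequence, hence everywhere by monotonicity.
-/

open scoped RealInnerProductSpace
open Filter Topology

theorem frequently_lt_of_le_sub_succ {b θ : ℕ → ℝ} (hθ : ∀ k, 0 ≤ θ k)
    (hb : ∀ k, b k ≤ θ k - θ (k + 1)) {ε : ℝ} (hε : 0 < ε) : ∃ᶠ k in atTop, b k < ε := by
  rw [frequently_atTop]
  intro N
  by_contra! hge
  obtain ⟨M, hM⟩ := exists_nat_gt (θ N / ε)
  have hsum : (M : ℝ) * ε ≤ θ N - θ (N + M) := calc
    (M : ℝ) * ε = ∑ _i ∈ Finset.range M, ε := by simp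
    _ ≤ ∑ i ∈ Finset.range M, b (N + i) :=
      Finset.sum_le_sum fun i _ => hge _ (Nat.le_add_right N i)
    _ ≤ ∑ i ∈ Finset.range M, (θ (N + i) - θ (N + (i + 1))) :=
      Finset.sum_le_sum fun i _ => hb _
    _ = θ N - θ (N + M) := Finset.sum_range_sub' (fun i => θ (N + i)) M
  rw [div_lt_iff₀ hε] at hM
  linarith [hθ (N + M)]

theorem tendsto_of_sq_norm_sub_le {α E : Type*} [SeminormedAddCommGroup E] {l : Filter α}
    {f : α → E} {a : E} {g : α → ℝ}
    (hle : ∀ i, ‖f i - a‖ ^ 2 ≤ g i) (hg : Tendsto g l (𝓝 0)) : Tendsto f l (𝓝 a) := by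
  rw [tendsto_iff_norm_sub_tendsto_zero]
  simpa using (squeeze_zero (fun _ => sq_nonneg _) hle hg).sqrt

section InnerProductSpace

variable {E : Type*} [NormedAddCommGroup E] [InnerProductSpace ℝ E]

theorem inner_sub_le_zero_of_forall_norm_sub_le {S : Set E} (hS : Convex ℝ S) {w p : E}
    (hp : p ∈ S) (hmin : ∀ v ∈ S, ‖w - p‖ ≤ ‖w - v‖) {v : E} (hv : v ∈ S) :
    ⟪w - p, v - p⟫ ≤ 0 := by
  refine (norm_eq_iInf_iff_real_inner_le_zero hS hp).1 ?_ v hv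
  have : Nonempty S := ⟨⟨p, hp⟩⟩
  have hbdd : BddBelow (Set.range fun v : S => ‖w - v‖) := ⟨0, by rintro _ ⟨v, rfl⟩; positivity⟩
  exact le_antisymm (le_ciInf fun v => hmin v v.2) (ciInf_le hbdd ⟨p, hp⟩)

theorem inner_eq_zero_of_forall_norm_sub_le_of_mem_direction {S : AffineSubspace ℝ E}
    {w p : E} (hp : p ∈ S) (hmin : ∀ v ∈ S, ‖w - p‖ ≤ ‖w - v‖) {v : E}
    (hv : v ∈ S.direction) : ⟪w - p, v⟫ = 0 := by
  have h₁ := inner_sub_le_zero_of_forall_norm_sub_le S.convex hp hmin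
    (S.vadd_mem_of_mem_direction hv hp)
  have h₂ := inner_sub_le_zero_of_forall_norm_sub_le S.convex hp hmin
    (S.vadd_mem_of_mem_direction (S.direction.neg_mem hv) hp)
  simp only [vadd_eq_add, add_sub_cancel_right, inner_neg_right] at h₁ h₂
  linarith

theorem eq_of_inner_sub_le_zero {c s a : E} (hs : ⟪c - s, a - s⟫ ≤ 0)
    (ha : ⟪c - a, s - a⟫ ≤ 0) : a = s := by
  have hsq : ‖a - s‖ ^ 2 = ⟪c - s, a - s⟫ + ⟪c - a, s - a⟫ := by
    rw [← real_inner_self_eq_norm_sq, ← neg_sub a s, inner_neg_right, ← sub_eq_add_neg,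
      ← inner_sub_left, sub_sub_sub_cancel_left]
  have hzero : ‖a - s‖ ^ 2 = 0 := le_antisymm (by linarith) (sq_nonneg _)
  exact sub_eq_zero.1 (norm_eq_zero.1 (pow_eq_zero_iff two_ne_zero |>.1 hzero))

/-- The iteration of the theorem, shifted by one (`x k`, `y k` here are `x (k+1)`, `y (k+1)`
there), with both projections replaced by their variational characterisations. -/
structure IsDykstraSeq (K : Set E) (S : AffineSubspace ℝ E) (c : E) (x y z : ℕ → E) :
    Prop where
  z_zero : z 0 = c
  z_succ : ∀ k, z (k + 1) = z k - (x k - y k)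
  x_mem : ∀ k, x k ∈ K
  inner_x_le : ∀ k, ∀ v ∈ K, ⟪z k - x k, v - x k⟫ ≤ 0
  y_mem : ∀ k, y k ∈ S
  inner_y_eq : ∀ k, ∀ v ∈ S.direction, ⟪x k - y k, v⟫ = 0

def dykstraPotential (x y z : ℕ → E) (s : E) (k : ℕ) : ℝ :=
  ‖y k - s‖ ^ 2 + 2 * ⟪z k - x k, x k - s⟫

namespace IsDykstraSeq

variable {K : Set E} {S : AffineSubspace ℝ E} {c s : E} {x y z : ℕ → E}

theorem inner_sub_z_eq_zero (h : IsDykstraSeq K S c x y z) (k : ℕ) {v : E}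
    (hv : v ∈ S.direction) : ⟪c - z k, v⟫ = 0 := by
  induction k with
  | zero => simp [h.z_zero]
  | succ k ih =>
    rw [h.z_succ, show c - (z k - (x k - y k)) = (c - z k) + (x k - y k) by abel,
      inner_add_left, ih, h.inner_y_eq k v hv, add_zero]

theorem inner_sub_x_nonneg (h : IsDykstraSeq K S c x y z) (hsK : s ∈ K) (k : ℕ) :
    0 ≤ ⟪z k - x k, x k - s⟫ := by
  have := h.inner_x_le k s hsK
  rw [← neg_sub (x k) s, inner_neg_right] at this
  linarith

theorem sq_norm_y_sub_le_potential (h : IsDykstraSeq K S c x y z) (hsK : s ∈ K) (k : ℕ) :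
    ‖y k - s‖ ^ 2 ≤ dykstraPotential x y z s k := by
  unfold dykstraPotential
  linarith [h.inner_sub_x_nonneg hsK k]

theorem potential_nonneg (h : IsDykstraSeq K S c x y z) (hsK : s ∈ K) (k : ℕ) :
    0 ≤ dykstraPotential x y z s k :=
  (sq_nonneg _).trans (h.sq_norm_y_sub_le_potential hsK k)

theorem potential_sub_potential_succ (h : IsDykstraSeq K S c x y z) (hsS : s ∈ S) (k : ℕ) :
    dykstraPotential x y z s k - dykstraPotential x y z s (k + 1) =
      ‖y k - x (k + 1)‖ ^ 2 + ‖x (k + 1) - y (k + 1)‖ ^ 2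
        - 2 * ⟪z k - x k, x (k + 1) - x k⟫ := by
  have hz : z (k + 1) - x (k + 1) = (z k - x k) + (y k - x (k + 1)) := by
    rw [h.z_succ]; abel
  have horth : ⟪x (k + 1) - y (k + 1), y (k + 1) - s⟫ = 0 :=
    h.inner_y_eq _ _ (S.vsub_mem_direction (h.y_mem _) hsS)
  unfold dykstraPotential
  rw [hz]
  generalize x k = x₀, x (k + 1) = x₁, y k = y₀, y (k + 1) = y₁, z k = z₀ at horth ⊢
  simp only [← real_inner_self_eq_norm_sq, inner_sub_left, inner_sub_right, inner_add_left,
    real_inner_comm] at horth ⊢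
  linarith

theorem sq_norm_sub_le_potential_sub (h : IsDykstraSeq K S c x y z) (hsS : s ∈ S) (k : ℕ) :
    ‖x (k + 1) - y (k + 1)‖ ^ 2 ≤
      dykstraPotential x y z s k - dykstraPotential x y z s (k + 1) := by
  rw [h.potential_sub_potential_succ hsS]
  linarith [h.inner_x_le k _ (h.x_mem (k + 1)), sq_nonneg ‖y k - x (k + 1)‖]

theorem potential_antitone (h : IsDykstraSeq K S c x y z) (hsS : s ∈ S) :
    Antitone (dykstraPotential x y z s) :=
  antitone_nat_of_succ_le fun k => by
    linarith [h.sq_norm_sub_le_potential_sub hsS k, sq_nonneg ‖x (k + 1) - y (k + 1)‖]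

theorem exists_tendsto_potential (h : IsDykstraSeq K S c x y z) (hsK : s ∈ K) (hsS : s ∈ S) :
    ∃ L, Tendsto (dykstraPotential x y z s) atTop (𝓝 L) :=
  ⟨_, tendsto_atTop_ciInf (h.potential_antitone hsS)
    ⟨0, by rintro _ ⟨k, rfl⟩; exact h.potential_nonneg hsK k⟩⟩

theorem tendsto_sub_zero (h : IsDykstraSeq K S c x y z) (hsK : s ∈ K) (hsS : s ∈ S) :
    Tendsto (fun k => x k - y k) atTop (𝓝 0) := by
  obtain ⟨L, hL⟩ := h.exists_tendsto_potential hsK hsS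
  have hdecr : Tendsto (fun k => dykstraPotential x y z s k - dykstraPotential x y z s (k + 1))
      atTop (𝓝 0) := by
    simpa using hL.sub (hL.comp (tendsto_add_atTop_nat 1))
  rw [← tendsto_add_atTop_iff_nat 1]
  exact tendsto_of_sq_norm_sub_le (by simpa using h.sq_norm_sub_le_potential_sub hsS) hdecr

theorem isBounded_range_x (h : IsDykstraSeq K S c x y z) (hsK : s ∈ K) (hsS : s ∈ S) :
    Bornology.IsBounded (Set.range x) := by
  have hy : ∀ k, y k ∈ Metric.closedBall s √(dykstraPotential x y z s 0) := fun k => by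
    rw [Metric.mem_closedBall, dist_eq_norm]
    exact Real.le_sqrt_of_sq_le ((h.sq_norm_y_sub_le_potential hsK k).trans
      (h.potential_antitone hsS (Nat.zero_le k)))
  refine ((Metric.isBounded_range_of_tendsto _ (h.tendsto_sub_zero hsK hsS)).add
    (Metric.isBounded_closedBall (x := s) (r := √(dykstraPotential x y z s 0)))).subset ?_
  rintro _ ⟨k, rfl⟩
  exact ⟨_, ⟨k, rfl⟩, _, hy k, sub_add_cancel _ _⟩

theorem two_mul_neg_inner_le (h : IsDykstraSeq K S c x y z) (hsS : s ∈ S) (k : ℕ) :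
    2 * -⟪c - z (k + 1), x (k + 1) - y (k + 1)⟫ ≤
      (‖c - z (k + 1)‖ ^ 2 + dykstraPotential x y z s k)
        - (‖c - z (k + 2)‖ ^ 2 + dykstraPotential x y z s (k + 1)) := by
  have hcz : c - z (k + 2) = (c - z (k + 1)) + (x (k + 1) - y (k + 1)) := by
    rw [h.z_succ]; abel
  rw [hcz, norm_add_sq_real]
  linarith [h.sq_norm_sub_le_potential_sub hsS k]

theorem frequently_neg_inner_lt (h : IsDykstraSeq K S c x y z) (hsK : s ∈ K) (hsS : s ∈ S)
    {ε : ℝ} (hε : 0 < ε) : ∃ᶠ k in atTop, -⟪c - z k, x k - y k⟫ < ε := by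
  have hfreq := frequently_lt_of_le_sub_succ
    (fun k => add_nonneg (sq_nonneg ‖c - z (k + 1)‖) (h.potential_nonneg hsK k))
    (h.two_mul_neg_inner_le hsS) (mul_pos two_pos hε)
  exact (tendsto_add_atTop_nat 1).frequently (hfreq.mono fun k hk => by linarith)

theorem inner_add_inner_eq_neg_inner (h : IsDykstraSeq K S c x y z) (hsS : s ∈ S) (k : ℕ) :
    ⟪c - x k, s - x k⟫ + ⟪z k - x k, x k - s⟫ = -⟪c - z k, x k - y k⟫ := by
  have horth : ⟪c - z k, s - y k⟫ = 0 :=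
    h.inner_sub_z_eq_zero k (S.vsub_mem_direction hsS (h.y_mem k))
  simp only [inner_sub_left, inner_sub_right, real_inner_comm] at horth ⊢
  linarith

theorem tendsto_potential_comp_zero (h : IsDykstraSeq K S c x y z) (hK : IsClosed K)
    (hS : IsClosed (S : Set E)) (hsK : s ∈ K) (hsS : s ∈ S)
    (hs : ∀ v ∈ K ∩ S, ⟪c - s, v - s⟫ ≤ 0) {τ : ℕ → ℕ} (hτ : Tendsto τ atTop atTop) {a : E}
    (hxa : Tendsto (x ∘ τ) atTop (𝓝 a)) {ε : ℕ → ℝ} (hε : Tendsto ε atTop (𝓝 0))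
    (hsmall : ∀ j, -⟪c - z (τ j), x (τ j) - y (τ j)⟫ ≤ ε j) :
    Tendsto (dykstraPotential x y z s ∘ τ) atTop (𝓝 0) := by
  have hya : Tendsto (fun j => y (τ j)) atTop (𝓝 a) := by
    simpa using hxa.sub ((h.tendsto_sub_zero hsK hsS).comp hτ)
  have haK : a ∈ K := hK.mem_of_tendsto hxa (Eventually.of_forall fun j => h.x_mem _)
  have haS : a ∈ S := hS.mem_of_tendsto hya (Eventually.of_forall fun j => h.y_mem _)
  have hta : Tendsto (fun j => ⟪c - x (τ j), s - x (τ j)⟫) atTop (𝓝 ⟪c - a, s - a⟫) :=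
    (tendsto_const_nhds.sub hxa).inner (tendsto_const_nhds.sub hxa)
  have hle : ∀ j, ⟪c - x (τ j), s - x (τ j)⟫ + ⟪z (τ j) - x (τ j), x (τ j) - s⟫ ≤ ε j :=
    fun j => (h.inner_add_inner_eq_neg_inner hsS (τ j)).trans_le (hsmall j)
  have has : a = s := eq_of_inner_sub_le_zero (hs a ⟨haK, haS⟩)
    (le_of_tendsto_of_tendsto' hta hε fun j => by linarith [hle j, h.inner_sub_x_nonneg hsK (τ j)])
  subst has
  have hgap : Tendsto (fun j => ε j - ⟪c - x (τ j), a - x (τ j)⟫) atTop (𝓝 0) := by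
    simpa using hε.sub hta
  have hg : Tendsto (fun j => ⟪z (τ j) - x (τ j), x (τ j) - a⟫) atTop (𝓝 0) :=
    squeeze_zero (fun j => h.inner_sub_x_nonneg hsK _) (fun j => by linarith [hle j]) hgap
  have hy : Tendsto (fun j => ‖y (τ j) - a‖ ^ 2) atTop (𝓝 0) := by
    simpa using ((hya.sub_const a).norm.pow 2)
  simpa [Function.comp_def, dykstraPotential] using hy.add (hg.const_mul 2)

theorem tendsto_x [ProperSpace E] (h : IsDykstraSeq K S c x y z) (hK : IsClosed K)
    (hS : IsClosed (S : Set E)) (hsK : s ∈ K) (hsS : s ∈ S)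
    (hs : ∀ v ∈ K ∩ S, ⟪c - s, v - s⟫ ≤ 0) : Tendsto x atTop (𝓝 s) := by
  obtain ⟨L, hL⟩ := h.exists_tendsto_potential hsK hsS
  obtain ⟨σ, hσ, hσsmall⟩ := extraction_forall_of_frequently fun j : ℕ =>
    h.frequently_neg_inner_lt hsK hsS (Nat.one_div_pos_of_nat (n := j))
  obtain ⟨a, -, ρ, hρ, hxa⟩ :=
    tendsto_subseq_of_bounded (h.isBounded_range_x hsK hsS) fun j => Set.mem_range_self (σ j)
  have hτ := (hσ.comp hρ).tendsto_atTop
  have h0 := h.tendsto_potential_comp_zero hK hS hsK hsS hs hτ hxa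
    (tendsto_one_div_add_atTop_nhds_zero_nat.comp hρ.tendsto_atTop) fun j => (hσsmall (ρ j)).le
  obtain rfl : L = 0 := tendsto_nhds_unique (hL.comp hτ) h0
  have hy : Tendsto y atTop (𝓝 s) := tendsto_of_sq_norm_sub_le (h.sq_norm_y_sub_le_potential hsK) hL
  simpa using (h.tendsto_sub_zero hsK hsS).add hy

end IsDykstraSeq

end InnerProductSpace

theorem dykstra_convergence_general
    {m n : ℕ} (K : Set (EuclideanSpace ℝ (Fin n)))
    (hKcl : IsClosed K) (hKconv : Convex ℝ K)
    (A : Matrix (Fin m) (Fin n) ℝ) (b : EuclideanSpace ℝ (Fin m))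
    (Aff : Set (EuclideanSpace ℝ (Fin n)))
    (hAff : Aff = {x | mulVecE A x = b})
    (projK projAff projInt : EuclideanSpace ℝ (Fin n) → EuclideanSpace ℝ (Fin n))
    (hprojK : ∀ w, projK w ∈ K ∧ ∀ v ∈ K, ‖w - projK w‖ ≤ ‖w - v‖)
    (hprojAff : ∀ w, projAff w ∈ Aff ∧ ∀ v ∈ Aff, ‖w - projAff w‖ ≤ ‖w - v‖)
    (hprojInt : ∀ w, projInt w ∈ K ∩ Aff ∧ ∀ v ∈ K ∩ Aff, ‖w - projInt w‖ ≤ ‖w - v‖)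
    (c : EuclideanSpace ℝ (Fin n))
    (x y z : ℕ → EuclideanSpace ℝ (Fin n))
    (hz0 : z 0 = c)
    (hx : ∀ k, x (k + 1) = projK (z k))
    (hy : ∀ k, y (k + 1) = projAff (x (k + 1)))
    (hz : ∀ k, z (k + 1) = z k - (x (k + 1) - y (k + 1))) :
    Filter.Tendsto x Filter.atTop (nhds (projInt c)) := by
  set S : AffineSubspace ℝ (EuclideanSpace ℝ (Fin n)) :=
    (affineSpan ℝ {b}).comap (Matrix.toLpLin 2 2 A).toAffineMap
  have hS : (S : Set (EuclideanSpace ℝ (Fin n))) = Aff := by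
    ext; simp [S, hAff, mulVecE, Matrix.toLpLin_apply]
  subst hS
  have hseq : IsDykstraSeq K S c (fun k => x (k + 1)) (fun k => y (k + 1)) z :=
    { z_zero := hz0
      z_succ := hz
      x_mem := fun k => by
        rw [hx k]; exact (hprojK _).1
      inner_x_le := fun k _ hv => by
        rw [hx k]; exact inner_sub_le_zero_of_forall_norm_sub_le hKconv (hprojK _).1 (hprojK _).2 hv
      y_mem := fun k => by
        rw [hy k]; exact (hprojAff _).1
      inner_y_eq := fun k _ hv => by
        rw [hy k]
        exact inner_eq_zero_of_forall_norm_sub_le_of_mem_direction (hprojAff _).1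
          (hprojAff _).2 hv }
  obtain ⟨⟨hsK, hsS⟩, hmin⟩ := hprojInt c
  exact (tendsto_add_atTop_iff_nat 1).1 (hseq.tendsto_x hKcl S.closed_of_finiteDimensional hsK hsS
    fun v hv => inner_sub_le_zero_of_forall_norm_sub_le (hKconv.inter S.convex) ⟨hsK, hsS⟩ hmin hv)

/-- Convergence of the alternating projection method with Dykstra's correction:
for a nonempty closed convex set `K` and a nonempty affine subspace
`𝒜 = {x : Ax = b}` with `K ∩ 𝒜 ≠ ∅`, the sequence `(x k)` produced by
`z 0 = c`, `x (k+1) = proj_K (z k)`, `y (k+1) = proj_𝒜 (x (k+1))`,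
`z (k+1) = z k − (x (k+1) − y (k+1))` converges to the projection of `c`
onto `K ∩ 𝒜`. -/
theorem dykstra_convergence
    {m n : ℕ} (K : Set (EuclideanSpace ℝ (Fin n)))
    (hKne : K.Nonempty) (hKcl : IsClosed K) (hKconv : Convex ℝ K)
    (A : Matrix (Fin m) (Fin n) ℝ) (b : EuclideanSpace ℝ (Fin m))
    (Aff : Set (EuclideanSpace ℝ (Fin n)))
    (hAff : Aff = {x | mulVecE A x = b}) (hAffne : Aff.Nonempty)
    (hKA : (K ∩ Aff).Nonempty)
    (projK projAff projInt : EuclideanSpace ℝ (Fin n) → EuclideanSpace ℝ (Fin n))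
    (hprojK : ∀ w, projK w ∈ K ∧ ∀ v ∈ K, ‖w - projK w‖ ≤ ‖w - v‖)
    (hprojAff : ∀ w, projAff w ∈ Aff ∧ ∀ v ∈ Aff, ‖w - projAff w‖ ≤ ‖w - v‖)
    (hprojInt : ∀ w, projInt w ∈ K ∩ Aff ∧ ∀ v ∈ K ∩ Aff, ‖w - projInt w‖ ≤ ‖w - v‖)
    (c : EuclideanSpace ℝ (Fin n))
    (x y z : ℕ → EuclideanSpace ℝ (Fin n))
    (hz0 : z 0 = c)
    (hx : ∀ k, x (k + 1) = projK (z k))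
    (hy : ∀ k, y (k + 1) = projAff (x (k + 1)))
    (hz : ∀ k, z (k + 1) = z k - (x (k + 1) - y (k + 1))) :
    Filter.Tendsto x Filter.atTop (nhds (projInt c)) :=
  dykstra_convergence_general K hKcl hKconv A b Aff hAff projK projAff projInt hprojK hprojAff
    hprojInt c x y z hz0 hx hy hz
end

section
/- (Dual interpretation of alternating projections.) Let K be a nonempty closed convex cone in ℝⁿ, let A ∈ ℝ^{m×n} with AAᵀ invertible, b ∈ ℝᵐ, c ∈ ℝⁿ, and 𝒜 = {x : Ax = b}. Define the dual gradient sequence by y₀ = 0 and, for k ≥ 0: x_{k+1} = proj_K(c + Aᵀy_k), y_{k+1} = y_k + (AAᵀ)⁻¹(b − Ax_{k+1}). Define the Dykstra sequence by z₀ = c and, for k ≥ 0: x'_{k+1} = proj_K(z_k), y'_{k+1} = proj_𝒜(x'_{k+1}), z_{k+1} = z_k − (x'_{k+1} − y'_{k+1}). Then for all k ≥ 0: z_k = c + Aᵀy_k, and hence x_{k+1} = x'_{k+1} for all k; i.e., the gradient ascent method on the dual function θ with constant metric W = (AAᵀ)⁻¹ and unit step size generates exactly the same primal iterates as the alternating projection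 method with Dykstra's correction. -/
/-!
The Dykstra correction `x' - proj_𝒜 x'` equals `Aᵀ (AAᵀ)⁻¹ (A x' - b)`, because the nearest point
of `𝒜` is given by the closed formula `w - Aᵀ (AAᵀ)⁻¹ (A w - b)`: that point lies in `𝒜`, and `w`
minus it lies in the range of `Aᵀ`, which is orthogonal to `𝒜 - 𝒜 = ker A`. Hence each Dykstra
step moves `z` by `Aᵀ` applied to the dual step `(AAᵀ)⁻¹ (b - A x)`; since both methods then
project the same point onto `K`, `z k = c + Aᵀ y k` follows by induction.
-/

open scoped Matrix

section mulVecE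

variable {m n : ℕ}

lemma mulVecE_eq_toEuclideanLin (A : Matrix (Fin m) (Fin n) ℝ) :
    mulVecE A = Matrix.toEuclideanLin A := rfl

lemma mulVecE_zero (A : Matrix (Fin m) (Fin n) ℝ) : mulVecE A 0 = 0 :=
  map_zero (Matrix.toEuclideanLin A)

lemma mulVecE_add (A : Matrix (Fin m) (Fin n) ℝ) (v w : EuclideanSpace ℝ (Fin n)) :
    mulVecE A (v + w) = mulVecE A v + mulVecE A w :=
  map_add (Matrix.toEuclideanLin A) v w

lemma mulVecE_sub (A : Matrix (Fin m) (Fin n) ℝ) (v w : EuclideanSpace ℝ (Fin n)) :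
    mulVecE A (v - w) = mulVecE A v - mulVecE A w :=
  map_sub (Matrix.toEuclideanLin A) v w

lemma mulVecE_one (v : EuclideanSpace ℝ (Fin m)) : mulVecE 1 v = v := by
  simp [mulVecE]

lemma mulVecE_mulVecE {p : ℕ} (A : Matrix (Fin m) (Fin n) ℝ) (B : Matrix (Fin n) (Fin p) ℝ)
    (u : EuclideanSpace ℝ (Fin p)) : mulVecE A (mulVecE B u) = mulVecE (A * B) u := by
  simp [mulVecE, Matrix.mulVec_mulVec]

lemma inner_mulVecE_transpose (A : Matrix (Fin m) (Fin n) ℝ)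
    (u : EuclideanSpace ℝ (Fin m)) (v : EuclideanSpace ℝ (Fin n)) :
    inner ℝ (mulVecE Aᵀ u) v = inner ℝ u (mulVecE A v) := by
  rw [mulVecE_eq_toEuclideanLin, mulVecE_eq_toEuclideanLin,
    ← Matrix.conjTranspose_eq_transpose_of_trivial,
    Matrix.toEuclideanLin_conjTranspose_eq_adjoint, LinearMap.adjoint_inner_left]

end mulVecE

theorem eq_of_isMinOn_norm_sub_of_inner_eq_zero {E : Type*} [NormedAddCommGroup E]
    [InnerProductSpace ℝ E] {S : Set E} {w p q : E}
    (hp : IsMinOn (fun v => ‖w - v‖) S p) (hq : q ∈ S) (horth : inner ℝ (w - q) (q - p) = 0) :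
    p = q := by
  have hpyth : ‖w - p‖ ^ 2 = ‖w - q‖ ^ 2 + ‖q - p‖ ^ 2 := by
    rw [← sub_add_sub_cancel w q p, norm_add_sq_real, horth]
    ring
  have hle : ‖w - p‖ ≤ ‖w - q‖ := hp hq
  have hqp : ‖q - p‖ = 0 := by
    nlinarith [norm_nonneg (w - p), norm_nonneg (w - q), norm_nonneg (q - p)]
  exact (sub_eq_zero.mp (norm_eq_zero.mp hqp)).symm

section affineProj

variable {m n : ℕ} (A : Matrix (Fin m) (Fin n) ℝ) (b : EuclideanSpace ℝ (Fin m))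

noncomputable def affineProj (w : EuclideanSpace ℝ (Fin n)) : EuclideanSpace ℝ (Fin n) :=
  w - mulVecE Aᵀ (mulVecE (A * Aᵀ)⁻¹ (mulVecE A w - b))

lemma sub_affineProj (w : EuclideanSpace ℝ (Fin n)) :
    w - affineProj A b w = mulVecE Aᵀ (mulVecE (A * Aᵀ)⁻¹ (mulVecE A w - b)) :=
  sub_sub_cancel _ _

variable {A}

lemma mulVecE_affineProj (hA : IsUnit (A * Aᵀ)) (w : EuclideanSpace ℝ (Fin n)) :
    mulVecE A (affineProj A b w) = b := by
  have hinv : (A * Aᵀ) * (A * Aᵀ)⁻¹ = 1 :=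
    Matrix.mul_nonsing_inv _ ((Matrix.isUnit_iff_isUnit_det _).mp hA)
  rw [affineProj, mulVecE_sub, mulVecE_mulVecE, mulVecE_mulVecE, hinv, mulVecE_one,
    sub_sub_cancel]

theorem eq_affineProj_of_isMinOn (hA : IsUnit (A * Aᵀ)) {w p : EuclideanSpace ℝ (Fin n)}
    (hp : mulVecE A p = b) (hmin : IsMinOn (fun v => ‖w - v‖) {x | mulVecE A x = b} p) :
    p = affineProj A b w := by
  refine eq_of_isMinOn_norm_sub_of_inner_eq_zero hmin (mulVecE_affineProj b hA w) ?_
  rw [sub_affineProj, inner_mulVecE_transpose, mulVecE_sub A, mulVecE_affineProj b hA, hp, sub_self,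
    inner_zero_right]

end affineProj

theorem dual_gradient_eq_dykstra_general
    {m n : ℕ}
    (A : Matrix (Fin m) (Fin n) ℝ) (hA : IsUnit (A * Aᵀ))
    (b : EuclideanSpace ℝ (Fin m)) (c : EuclideanSpace ℝ (Fin n))
    (Aff : Set (EuclideanSpace ℝ (Fin n)))
    (hAff : Aff = {x | mulVecE A x = b})
    (projK projAff : EuclideanSpace ℝ (Fin n) → EuclideanSpace ℝ (Fin n))
    (hprojAff : ∀ w, projAff w ∈ Aff ∧ ∀ v ∈ Aff, ‖w - projAff w‖ ≤ ‖w - v‖)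
    (y : ℕ → EuclideanSpace ℝ (Fin m))
    (x x' y' z : ℕ → EuclideanSpace ℝ (Fin n))
    (hy0 : y 0 = 0)
    (hx : ∀ k, x (k + 1) = projK (c + mulVecE Aᵀ (y k)))
    (hy : ∀ k, y (k + 1) = y k + mulVecE (A * Aᵀ)⁻¹ (b - mulVecE A (x (k + 1))))
    (hz0 : z 0 = c)
    (hx' : ∀ k, x' (k + 1) = projK (z k))
    (hy' : ∀ k, y' (k + 1) = projAff (x' (k + 1)))
    (hz : ∀ k, z (k + 1) = z k - (x' (k + 1) - y' (k + 1))) :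
    (∀ k, z k = c + mulVecE Aᵀ (y k)) ∧ ∀ k, x (k + 1) = x' (k + 1) := by
  subst hAff
  have hprojAff_eq (w) : projAff w = affineProj A b w :=
    eq_affineProj_of_isMinOn b hA (hprojAff w).1 (hprojAff w).2
  have hzy : ∀ k, z k = c + mulVecE Aᵀ (y k) := by
    intro k
    induction k with
    | zero => rw [hz0, hy0, mulVecE_zero, add_zero]
    | succ k ih =>
      have hxx : x' (k + 1) = x (k + 1) := by rw [hx' k, ih, hx k]
      rw [hz k, hy' k, hprojAff_eq, sub_affineProj, ih, hy k, hxx]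
      simp only [mulVecE_add, mulVecE_sub]
      abel
  exact ⟨hzy, fun k => by rw [hx k, hx' k, hzy k]⟩

/-- Dual interpretation of alternating projections: the gradient ascent method on
the dual function `θ` with constant metric `W = (AAᵀ)⁻¹` and unit step size
generates exactly the same primal iterates as the alternating projection method
with Dykstra's correction; more precisely `z k = c + Aᵀ (y k)` for all `k`, and
hence `x (k+1) = x' (k+1)` for all `k`. -/
theorem dual_gradient_eq_dykstra
    {m n : ℕ} (K : Set (EuclideanSpace ℝ (Fin n)))
    (hKne : K.Nonempty) (hKcl : IsClosed K) (hKconv : Convex ℝ K)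
    (hKcone : ∀ x ∈ K, ∀ t : ℝ, 0 ≤ t → t • x ∈ K)
    (A : Matrix (Fin m) (Fin n) ℝ) (hA : IsUnit (A * Aᵀ))
    (b : EuclideanSpace ℝ (Fin m)) (c : EuclideanSpace ℝ (Fin n))
    (Aff : Set (EuclideanSpace ℝ (Fin n)))
    (hAff : Aff = {x | mulVecE A x = b})
    (projK projAff : EuclideanSpace ℝ (Fin n) → EuclideanSpace ℝ (Fin n))
    (hprojK : ∀ w, projK w ∈ K ∧ ∀ v ∈ K, ‖w - projK w‖ ≤ ‖w - v‖)
    (hprojAff : ∀ w, projAff w ∈ Aff ∧ ∀ v ∈ Aff, ‖w - projAff w‖ ≤ ‖w - v‖)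
    (y : ℕ → EuclideanSpace ℝ (Fin m))
    (x x' y' z : ℕ → EuclideanSpace ℝ (Fin n))
    (hy0 : y 0 = 0)
    (hx : ∀ k, x (k + 1) = projK (c + mulVecE Aᵀ (y k)))
    (hy : ∀ k, y (k + 1) = y k + mulVecE (A * Aᵀ)⁻¹ (b - mulVecE A (x (k + 1))))
    (hz0 : z 0 = c)
    (hx' : ∀ k, x' (k + 1) = projK (z k))
    (hy' : ∀ k, y' (k + 1) = projAff (x' (k + 1)))
    (hz : ∀ k, z (k + 1) = z k - (x' (k + 1) - y' (k + 1))) :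
    (∀ k, z k = c + mulVecE Aᵀ (y k)) ∧ ∀ k, x (k + 1) = x' (k + 1) :=
  dual_gradient_eq_dykstra_general A hA b c Aff hAff projK projAff hprojAff y x x' y' z hy0 hx hy
    hz0 hx' hy' hz
end

section
/- (Convergence of alternating projections for convex sets.) Let K and P be nonempty closed convex subsets of ℝⁿ with K ∩ P ≠ ∅. Given y₀ ∈ ℝⁿ, define x_{k+1} = proj_K(y_k) and y_{k+1} = proj_P(x_{k+1}) for k ≥ 0. Then the sequences (x_k) and (y_k) converge to a common limit belonging to K ∩ P. -/
/-!
A nearest point `p` to `w` in a convex set `S` satisfies the Pythagorean inequality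
`‖p - q‖² + ‖w - p‖² ≤ ‖w - q‖²` for `q ∈ S`. Hence the iterates are Fejér monotone with respect
to `K ∩ P`: their distance to every common point decreases, by at least the squared length of the
step taken. So the iterates stay bounded and the steps `y k - x (k+1)` tend to zero; a cluster
point of `y` then lies in both closed sets, and Fejér monotonicity upgrades the convergence of a
subsequence to convergence of the whole sequence.
-/

open Filter Topology

section NearestPoint

variable {E : Type*} [NormedAddCommGroup E] [InnerProductSpace ℝ E]

def IsNearestPoint (S : Set E) (w p : E) : Prop :=
  p ∈ S ∧ ∀ v ∈ S, ‖w - p‖ ≤ ‖w - v‖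

variable {S : Set E} {w p q : E}

theorem IsNearestPoint.sq_norm_sub_add_sq_norm_sub_le (hS : Convex ℝ S)
    (hp : IsNearestPoint S w p) (hq : q ∈ S) :
    ‖p - q‖ ^ 2 + ‖w - p‖ ^ 2 ≤ ‖w - q‖ ^ 2 := by
  have : Nonempty S := ⟨⟨p, hp.1⟩⟩
  have hinf : ‖w - p‖ = ⨅ v : S, ‖w - v‖ :=
    le_antisymm (le_ciInf fun v => hp.2 v v.2) (ciInf_le (f := fun v : S => ‖w - v‖)
      ⟨0, by rintro _ ⟨v, rfl⟩; positivity⟩ ⟨p, hp.1⟩)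
  have hinner : inner ℝ (w - p) (q - p) ≤ 0 :=
    (norm_eq_iInf_iff_real_inner_le_zero hS hp.1).1 hinf q hq
  have hexpand := norm_sub_sq_real (w - p) (q - p)
  rw [sub_sub_sub_cancel_right, ← norm_neg (q - p), neg_sub] at hexpand
  linarith

theorem IsNearestPoint.norm_sub_le (hS : Convex ℝ S) (hp : IsNearestPoint S w p) (hq : q ∈ S) :
    ‖p - q‖ ≤ ‖w - q‖ :=
  pow_le_pow_iff_left₀ (norm_nonneg _) (norm_nonneg _) two_ne_zero |>.1 <|
    le_of_add_le_of_nonneg_left (hp.sq_norm_sub_add_sq_norm_sub_le hS hq) (sq_nonneg _)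

end NearestPoint

theorem tendsto_zero_of_le_sub_succ {a b : ℕ → ℝ} (ha : Antitone a)
    (ha_bdd : BddBelow (Set.range a))
    (hb_nonneg : ∀ k, 0 ≤ b k) (hb : ∀ k, b k ≤ a k - a (k + 1)) :
    Tendsto b atTop (𝓝 0) := by
  have hlim := tendsto_atTop_ciInf ha ha_bdd
  have hdiff : Tendsto (fun k => a k - a (k + 1)) atTop (𝓝 0) := by
    simpa using hlim.sub ((tendsto_add_atTop_iff_nat 1).2 hlim)
  exact squeeze_zero hb_nonneg hb hdiff

namespace AlternatingProjections

variable {E : Type*} [NormedAddCommGroup E] [InnerProductSpace ℝ E]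
  {K P : Set E} {x y : ℕ → E}

theorem sq_norm_sub_succ_add_le (hK : Convex ℝ K) (hP : Convex ℝ P)
    (hx : ∀ k, IsNearestPoint K (y k) (x (k + 1)))
    (hy : ∀ k, IsNearestPoint P (x (k + 1)) (y (k + 1))) {q : E} (hq : q ∈ K ∩ P) (k : ℕ) :
    ‖y (k + 1) - q‖ ^ 2 + ‖y k - x (k + 1)‖ ^ 2 ≤ ‖y k - q‖ ^ 2 := by
  have hstepK := (hx k).sq_norm_sub_add_sq_norm_sub_le hK hq.1
  have hstepP := pow_le_pow_left₀ (norm_nonneg _) ((hy k).norm_sub_le hP hq.2) 2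
  linarith

theorem antitone_norm_sub (hK : Convex ℝ K) (hP : Convex ℝ P)
    (hx : ∀ k, IsNearestPoint K (y k) (x (k + 1)))
    (hy : ∀ k, IsNearestPoint P (x (k + 1)) (y (k + 1))) {q : E} (hq : q ∈ K ∩ P) :
    Antitone fun k => ‖y k - q‖ :=
  antitone_nat_of_succ_le fun k =>
    (hy k).norm_sub_le hP hq.2 |>.trans ((hx k).norm_sub_le hK hq.1)

theorem tendsto_sub_zero (hK : Convex ℝ K) (hP : Convex ℝ P) (hKP : (K ∩ P).Nonempty)
    (hx : ∀ k, IsNearestPoint K (y k) (x (k + 1)))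
    (hy : ∀ k, IsNearestPoint P (x (k + 1)) (y (k + 1))) :
    Tendsto (fun k => y k - x (k + 1)) atTop (𝓝 0) := by
  obtain ⟨q, hq⟩ := hKP
  have hsq : Tendsto (fun k => ‖y k - x (k + 1)‖ ^ 2) atTop (𝓝 0) :=
    tendsto_zero_of_le_sub_succ
      (fun _ _ hkl => pow_le_pow_left₀ (norm_nonneg _) (antitone_norm_sub hK hP hx hy hq hkl) 2)
      ⟨0, by rintro _ ⟨k, rfl⟩; positivity⟩ (fun _ => by positivity)
      (fun k => by linarith [sq_norm_sub_succ_add_le hK hP hx hy hq k])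
  simpa using tendsto_zero_iff_norm_tendsto_zero.2 (by simpa using hsq.sqrt)

theorem exists_mem_inter_tendsto_subseq [ProperSpace E] (hKcl : IsClosed K) (hKconv : Convex ℝ K)
    (hPcl : IsClosed P) (hPconv : Convex ℝ P) (hKP : (K ∩ P).Nonempty)
    (hx : ∀ k, IsNearestPoint K (y k) (x (k + 1)))
    (hy : ∀ k, IsNearestPoint P (x (k + 1)) (y (k + 1))) :
    ∃ l ∈ K ∩ P, ∃ φ : ℕ → ℕ, StrictMono φ ∧ Tendsto (y ∘ φ) atTop (𝓝 l) := by
  obtain ⟨q, hq⟩ := hKP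
  have hbounded : ∀ k, y k ∈ Metric.closedBall q ‖y 0 - q‖ := fun k => by
    simpa [dist_eq_norm] using antitone_norm_sub hKconv hPconv hx hy hq (Nat.zero_le k)
  obtain ⟨l, -, φ, hφ, hyl⟩ := (isCompact_closedBall q _).tendsto_subseq hbounded
  have hlP : l ∈ P := hPcl.mem_of_tendsto hyl <| (eventually_ge_atTop 1).mono fun j hj => by
    obtain ⟨k, hk⟩ := Nat.exists_eq_add_of_le' (hj.trans hφ.le_apply)
    simpa [Function.comp, hk] using (hy k).1
  have hxl : Tendsto (fun j => x (φ j + 1)) atTop (𝓝 l) := by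
    simpa using hyl.sub ((tendsto_sub_zero hKconv hPconv ⟨q, hq⟩ hx hy).comp hφ.tendsto_atTop)
  exact ⟨l, ⟨hKcl.mem_of_tendsto hxl (.of_forall fun j => (hx (φ j)).1), hlP⟩, φ, hφ, hyl⟩

end AlternatingProjections

theorem alternating_projections_convergence_general
    {n : ℕ} (K P : Set (EuclideanSpace ℝ (Fin n)))
    (hKcl : IsClosed K) (hKconv : Convex ℝ K)
    (hPcl : IsClosed P) (hPconv : Convex ℝ P)
    (hKP : (K ∩ P).Nonempty)
    (projK projP : EuclideanSpace ℝ (Fin n) → EuclideanSpace ℝ (Fin n))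
    (hprojK : ∀ w, projK w ∈ K ∧ ∀ v ∈ K, ‖w - projK w‖ ≤ ‖w - v‖)
    (hprojP : ∀ w, projP w ∈ P ∧ ∀ v ∈ P, ‖w - projP w‖ ≤ ‖w - v‖)
    (x y : ℕ → EuclideanSpace ℝ (Fin n))
    (hx : ∀ k, x (k + 1) = projK (y k))
    (hy : ∀ k, y (k + 1) = projP (x (k + 1))) :
    ∃ l ∈ K ∩ P, Filter.Tendsto x Filter.atTop (nhds l) ∧
      Filter.Tendsto y Filter.atTop (nhds l) := by
  have hxK : ∀ k, IsNearestPoint K (y k) (x (k + 1)) := fun k => hx k ▸ hprojK (y k)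
  have hyP : ∀ k, IsNearestPoint P (x (k + 1)) (y (k + 1)) := fun k => hy k ▸ hprojP (x (k + 1))
  obtain ⟨l, hl, φ, hφ, hyφ⟩ := AlternatingProjections.exists_mem_inter_tendsto_subseq
    hKcl hKconv hPcl hPconv hKP hxK hyP
  have hyl : Tendsto y atTop (𝓝 l) := by
    rw [tendsto_iff_norm_sub_tendsto_zero] at hyφ ⊢
    exact (tendsto_iff_tendsto_subseq_of_antitone
      (AlternatingProjections.antitone_norm_sub hKconv hPconv hxK hyP hl) hφ.tendsto_atTop).2 hyφ
  have hxl : Tendsto x atTop (𝓝 l) := by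
    rw [← tendsto_add_atTop_iff_nat 1, tendsto_iff_norm_sub_tendsto_zero]
    exact squeeze_zero (fun _ => norm_nonneg _) (fun k => (hxK k).norm_sub_le hKconv hl.1)
      (tendsto_iff_norm_sub_tendsto_zero.1 hyl)
  exact ⟨l, hl, hxl, hyl⟩

/-- Convergence of plain alternating projections: for nonempty closed convex sets
`K, P ⊆ ℝⁿ` with `K ∩ P ≠ ∅`, the sequences `x (k+1) = proj_K (y k)` and
`y (k+1) = proj_P (x (k+1))` converge to a common limit in `K ∩ P`. -/
theorem alternating_projections_convergence
    {n : ℕ} (K P : Set (EuclideanSpace ℝ (Fin n)))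
    (hKne : K.Nonempty) (hKcl : IsClosed K) (hKconv : Convex ℝ K)
    (hPne : P.Nonempty) (hPcl : IsClosed P) (hPconv : Convex ℝ P)
    (hKP : (K ∩ P).Nonempty)
    (projK projP : EuclideanSpace ℝ (Fin n) → EuclideanSpace ℝ (Fin n))
    (hprojK : ∀ w, projK w ∈ K ∧ ∀ v ∈ K, ‖w - projK w‖ ≤ ‖w - v‖)
    (hprojP : ∀ w, projP w ∈ P ∧ ∀ v ∈ P, ‖w - projP w‖ ≤ ‖w - v‖)
    (x y : ℕ → EuclideanSpace ℝ (Fin n))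
    (hx : ∀ k, x (k + 1) = projK (y k))
    (hy : ∀ k, y (k + 1) = projP (x (k + 1))) :
    ∃ l ∈ K ∩ P, Filter.Tendsto x Filter.atTop (nhds l) ∧
      Filter.Tendsto y Filter.atTop (nhds l) :=
  alternating_projections_convergence_general K P hKcl hKconv hPcl hPconv hKP projK projP hprojK
    hprojP x y hx hy
end

section
/- (Lovász sandwich theorem.) Let G be a finite simple graph on vertex set {1,…,n}, let α(G) be its independence (stable) number and let χ(Ḡ) be the chromatic number of its complement graph Ḡ. Define ϑ(G) = sup{ ∑_{i,j=1}^n X_{ij} : X real symmetric n×n, X positive semidefinite, trace(X) = 1, and X_{ij} = 0 whenever {i,j} is an edge of G }. Then α(G) ≤ ϑ(G) ≤ χ(Ḡ). -/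
/-!
For an independent set `S`, the rank-one matrix `𝟙_S 𝟙_Sᵀ / |S|` is feasible with value `|S|`.
Conversely, let `c` be a proper colouring of `Ḡ` with `k` colours and put `w_a = k 𝟙_{c = a} - 𝟙`,
so that `∑_a w_a w_aᵀ = k² [c i = c j] - k`. Two distinct vertices of the same colour are adjacent
in `G`, so a feasible `X` vanishes there, and positive semidefiniteness gives
`0 ≤ ∑_a w_aᵀ X w_a = k² tr X - k ∑ᵢⱼ Xᵢⱼ = k² - k ∑ᵢⱼ Xᵢⱼ`.
-/

open Matrix Finset

namespace Matrix

variable {V : Type*} [Fintype V]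

theorem PosSemidef.sum_mul_mul_nonneg {X : Matrix V V ℝ} (hX : X.PosSemidef) (x : V → ℝ) :
    0 ≤ ∑ i, ∑ j, x i * X i j * x j := by
  simpa [dotProduct, mulVec, Finset.mul_sum, mul_assoc] using hX.dotProduct_mulVec_nonneg x

theorem PosSemidef.sum_entries_nonneg {X : Matrix V V ℝ} (hX : X.PosSemidef) :
    0 ≤ ∑ i, ∑ j, X i j := by
  simpa using hX.sum_mul_mul_nonneg 1

theorem sum_mul_ite_eq_trace {ι : Type*} [DecidableEq ι] {X : Matrix V V ℝ} (C : V → ι)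
    (hX : ∀ i j, i ≠ j → C i = C j → X i j = 0) :
    ∑ i, ∑ j, X i j * (if C i = C j then 1 else 0) = X.trace := by
  refine sum_congr rfl fun i _ => ?_
  rw [sum_eq_single i (fun j _ hji => by by_cases h : C i = C j <;> simp [h, hX i j (Ne.symm hji)])
    (by simp)]
  simp

end Matrix

namespace SimpleGraph

variable {V ι : Type*} [DecidableEq ι] [Fintype ι]

def colorVector (C : V → ι) (c : ι) (i : V) : ℝ :=
  (Fintype.card ι : ℝ) * (if C i = c then 1 else 0) - 1

theorem sum_colorVector_mul_colorVector (C : V → ι) (i j : V) :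
    ∑ c, colorVector C c i * colorVector C c j =
      (Fintype.card ι : ℝ) ^ 2 * (if C i = C j then 1 else 0) - Fintype.card ι := by
  have hprod : ∀ c, colorVector C c i * colorVector C c j =
      (Fintype.card ι : ℝ) ^ 2 * (if C i = c then (if C i = C j then 1 else 0) else 0)
        - Fintype.card ι * (if C i = c then 1 else 0)
        - Fintype.card ι * (if C j = c then 1 else 0) + 1 := by
    intro c
    unfold colorVector
    by_cases hi : C i = c <;> by_cases hj : C j = c <;> simp [hi, hj] <;> grind
  simp only [hprod, sum_add_distrib, sum_sub_distrib, ← mul_sum, Fintype.sum_ite_eq]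
  simp

variable [Fintype V] {G : SimpleGraph V}

theorem sum_entries_le_card_of_coloring {X : Matrix V V ℝ} (hX : X.PosSemidef) (htr : X.trace = 1)
    (hadj : ∀ i j, G.Adj i j → X i j = 0) (C : Gᶜ.Coloring ι) :
    ∑ i, ∑ j, X i j ≤ Fintype.card ι := by
  set k : ℝ := (Fintype.card ι : ℝ)
  have hk : 0 < k := by
    obtain ⟨v⟩ : Nonempty V := by
      by_contra h
      rw [not_nonempty_iff] at h
      simp [Matrix.trace] at htr
    have : Nonempty ι := ⟨C v⟩
    exact Nat.cast_pos.2 Fintype.card_pos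
  have hsame : ∀ i j, i ≠ j → C i = C j → X i j = 0 := fun i j hne hC =>
    hadj i j (by_contra fun h => C.valid ((G.compl_adj i j).2 ⟨hne, h⟩) hC)
  have hquad : ∑ c, ∑ i, ∑ j, colorVector C c i * X i j * colorVector C c j =
      k ^ 2 - k * ∑ i, ∑ j, X i j :=
    calc _ = ∑ i, ∑ j, X i j * ∑ c, colorVector C c i * colorVector C c j := by
          simp_rw [mul_sum]
          rw [sum_comm]
          refine sum_congr rfl fun i _ => ?_
          rw [sum_comm]
          exact sum_congr rfl fun j _ => sum_congr rfl fun c _ => by ring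
      _ = k ^ 2 * ∑ i, ∑ j, X i j * (if C i = C j then 1 else 0) - k * ∑ i, ∑ j, X i j := by
          simp only [sum_colorVector_mul_colorVector, mul_sum, ← sum_sub_distrib]
          exact sum_congr rfl fun i _ => sum_congr rfl fun j _ => by ring
      _ = _ := by rw [sum_mul_ite_eq_trace C hsame, htr, mul_one]
  have : 0 ≤ k ^ 2 - k * ∑ i, ∑ j, X i j :=
    hquad ▸ sum_nonneg fun c _ => hX.sum_mul_mul_nonneg (colorVector C c)
  nlinarith

variable (G) in
def thetaValues : Set ℝ :=
  {v | ∃ X : Matrix V V ℝ, X.PosSemidef ∧ X.trace = 1 ∧ (∀ i j, G.Adj i j → X i j = 0) ∧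
    v = ∑ i, ∑ j, X i j}

theorem thetaValues_nonneg : ∀ v ∈ G.thetaValues, 0 ≤ v := by
  rintro _ ⟨X, hX, -, -, rfl⟩
  exact hX.sum_entries_nonneg

theorem thetaValues_le_card_of_coloring (C : Gᶜ.Coloring ι) :
    ∀ v ∈ G.thetaValues, v ≤ Fintype.card ι := by
  rintro _ ⟨X, hX, htr, hadj, rfl⟩
  exact sum_entries_le_card_of_coloring hX htr hadj C

theorem card_mem_thetaValues [DecidableEq V] {s : Finset V} (hs : Gᶜ.IsClique (s : Set V))
    (hne : s.Nonempty) : (s.card : ℝ) ∈ G.thetaValues := by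
  set v : V → ℝ := fun i => if i ∈ s then 1 else 0
  have hcard : (s.card : ℝ) ≠ 0 := by exact_mod_cast hne.card_pos.ne'
  refine ⟨(s.card : ℝ)⁻¹ • vecMulVec v v, ?_, ?_, ?_, ?_⟩
  · simpa using (posSemidef_vecMulVec_self_star v).smul (inv_nonneg.2 (Nat.cast_nonneg s.card))
  · simp [trace_vecMulVec, dotProduct, v, hcard]
  · intro i j hij
    have : ¬ (i ∈ s ∧ j ∈ s) := fun ⟨hi, hj⟩ => ((G.compl_adj i j).1 (hs hi hj hij.ne)).2 hij
    simp only [Matrix.smul_apply, vecMulVec_apply, v]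
    split_ifs <;> simp_all
  · simp [vecMulVec_apply, v, hcard]

end SimpleGraph

/-- Lovász sandwich theorem: for a finite simple graph `G` on `n` vertices, the
independence number `α(G)` (the largest cardinality of a clique of the complement
graph) and the chromatic number `χ(Ḡ)` of the complement graph satisfy
`α(G) ≤ ϑ(G) ≤ χ(Ḡ)`, where
`ϑ(G) = sup { ∑ᵢⱼ Xᵢⱼ : X ⪰ 0, trace X = 1, Xᵢⱼ = 0 whenever {i,j} ∈ E(G) }`. -/
theorem lovasz_sandwich
    (n : ℕ) (G : SimpleGraph (Fin n)) (alpha chi : ℕ)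
    (halpha : IsGreatest {k : ℕ | ∃ s : Finset (Fin n),
        Gᶜ.IsClique (s : Set (Fin n)) ∧ s.card = k} alpha)
    (hchi : Gᶜ.chromaticNumber = (chi : ℕ∞))
    (theta : ℝ)
    (htheta : theta = sSup {v : ℝ | ∃ X : Matrix (Fin n) (Fin n) ℝ,
        X.PosSemidef ∧ Matrix.trace X = 1 ∧
        (∀ i j, G.Adj i j → X i j = 0) ∧ v = ∑ i, ∑ j, X i j}) :
    (alpha : ℝ) ≤ theta ∧ theta ≤ (chi : ℝ) := by
  obtain ⟨C⟩ : Gᶜ.Colorable chi := by rw [← SimpleGraph.chromaticNumber_le_iff_colorable, hchi]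
  have hle_chi : ∀ v ∈ G.thetaValues, v ≤ chi := by
    simpa using SimpleGraph.thetaValues_le_card_of_coloring C
  change theta = sSup G.thetaValues at htheta
  subst htheta
  refine ⟨?_, Real.sSup_le hle_chi (Nat.cast_nonneg chi)⟩
  obtain ⟨s, hs, rfl⟩ := halpha.1
  obtain rfl | hne := s.eq_empty_or_nonempty
  · simpa using Real.sSup_nonneg SimpleGraph.thetaValues_nonneg
  · exact le_csSup ⟨chi, hle_chi⟩ (SimpleGraph.card_mem_thetaValues hs hne)
end
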